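/- arXiv:math/0210463 — 6 statements merged into one kernel-verified Lean document; each statement's English description precedes it below -/
import Mathlib

section
/- Let Φ be a root system with positive roots Φ₊, and let Ψ₁, Ψ₂ ⊆ Φ₊ be two subsets each closed under addition of positive roots (i.e., if ψ ∈ Ψᵢ, φ ∈ Φ₊ and ψ + φ ∈ Φ₊ then ψ + φ ∈ Ψᵢ). If the sums of elements of Ψ₁ and Ψ₂ are equal, then Ψ₁ = Ψ₂. -/
open scoped RealInnerProductSpace BigOperators

noncomputable section

variable (V : Type) [NormedAddCommGroup V] [InnerProductSpace ℝ V] [FiniteDimensional ℝ V]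

/-- A finite, reduced, crystallographic root system in a Euclidean space `V`,
with a chosen set of positive roots and the corresponding simple roots. -/
structure RootSystemData where
  /-- the rank -/
  l : ℕ
  /-- the simple roots -/
  simple : Fin l → V
  /-- the set of roots -/
  roots : Finset V
  /-- the set of positive roots -/
  pos : Finset V
  pos_subset : pos ⊆ roots
  simple_mem_pos : ∀ i, simple i ∈ pos
  simple_indep : LinearIndependent ℝ simple
  span_roots : Submodule.span ℝ (roots : Set V) = ⊤
  root_ne_zero : ∀ α ∈ roots, α ≠ 0
  neg_mem : ∀ α ∈ roots, -α ∈ roots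
  pos_iff : ∀ α ∈ roots, (α ∈ pos ↔ -α ∉ pos)
  pos_combo : ∀ α ∈ pos, ∃ c : Fin l → ℕ, α = ∑ i, (c i : ℝ) • simple i
  crystal : ∀ α ∈ roots, ∀ β ∈ roots, ∃ n : ℤ, 2 * ⟪β, α⟫ / ⟪α, α⟫ = (n : ℝ)
  reflect_mem : ∀ α ∈ roots, ∀ β ∈ roots, β - (2 * ⟪β, α⟫ / ⟪α, α⟫) • α ∈ roots
  sub_mem : ∀ α ∈ roots, ∀ β ∈ roots, 0 < ⟪α, β⟫ → α ≠ β → α - β ∈ roots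
  reduced : ∀ α ∈ roots, ∀ c : ℝ, c • α ∈ roots → c = 1 ∨ c = -1

namespace RootSystemData

open Classical

variable {V}

/-- The pairing `⟨λ, α∨⟩ = 2(λ|α)/(α|α)` of a vector with the coroot of `α`. -/
def pair (lam α : V) : ℝ := 2 * ⟪lam, α⟫ / ⟪α, α⟫

/-- The orthogonal reflection in the hyperplane orthogonal to `α`. -/
def sRefl (α : V) : V ≃ₗᵢ[ℝ] V := Submodule.reflection ((ℝ ∙ α)ᗮ)

variable (R : RootSystemData V)

/-- Half the sum of the positive roots. -/
def ρ : V := (2 : ℝ)⁻¹ • ∑ φ ∈ R.pos, φ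

/-- The (finite) Weyl group, generated by the simple reflections. -/
def W : Subgroup (V ≃ₗᵢ[ℝ] V) :=
  Subgroup.closure (Set.range fun i => sRefl (R.simple i))

/-- The length of a Weyl group element: the minimal length of a word in the
simple reflections expressing it. -/
def len (w : V ≃ₗᵢ[ℝ] V) : ℕ :=
  sInf {k : ℕ | ∃ f : Fin k → Fin R.l,
    w = (List.ofFn fun j => sRefl (R.simple (f j))).prod}

/-- The inversion set `Φ_w = Φ₊ ∩ wΦ₋`. -/
def inversions (w : V ≃ₗᵢ[ℝ] V) : Finset V :=
  R.pos.filter fun x => -(w.symm x) ∈ R.pos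

end RootSystemData

/-!
Let `Γ = Ψ₁ \ Ψ₂` and `Δ = Ψ₂ \ Ψ₁`; they have the same sum `S`. For `γ ∈ Γ` and `δ ∈ Δ` we
have `⟪γ, δ⟫ ≤ 0`: otherwise `γ - δ` is a root, and according to its sign, adding it to `δ` or
its negative to `γ` would force `γ ∈ Ψ₂` or `δ ∈ Ψ₁`. Hence `‖S‖² = ∑ ⟪γ, δ⟫ ≤ 0`, so `S = 0`.
But positive roots are nonnegative combinations of the linearly independent simple roots, so a
nonempty set of them cannot sum to zero; thus `Γ = Δ = ∅`.
-/

theorem LinearIndependent.coeff_eq_zero_of_sum_eq_zero_of_nonneg {K M ι κ : Type*} [Field K]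
    [LinearOrder K] [IsStrictOrderedRing K] [AddCommGroup M] [Module K M] [Fintype ι]
    {v : ι → M} (hv : LinearIndependent K v) {s : Finset κ} {c : κ → ι → K}
    (hc : ∀ j ∈ s, ∀ i, 0 ≤ c j i) (h : ∑ j ∈ s, ∑ i, c j i • v i = 0) :
    ∀ j ∈ s, ∀ i, c j i = 0 := by
  rw [Finset.sum_comm] at h
  simp_rw [← Finset.sum_smul] at h
  intro j hj i
  have hsum : ∑ j ∈ s, c j i = 0 := Fintype.linearIndependent_iff.mp hv _ h i
  exact (Finset.sum_eq_zero_iff_of_nonneg fun j hj => hc j hj i).mp hsum j hj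

namespace RootSystemData

variable {V}
omit [FiniteDimensional ℝ V]
variable (R : RootSystemData V)

/-- `Ψ ⊆ Φ₊` is an ideal: `(Ψ + Φ₊) ∩ Φ₊ ⊆ Ψ`. -/
def IsIdeal (Ψ : Finset V) : Prop :=
  Ψ ⊆ R.pos ∧ ∀ ψ ∈ Ψ, ∀ φ ∈ R.pos, ψ + φ ∈ R.pos → ψ + φ ∈ Ψ

theorem exists_simple_coeffs :
    ∃ c : V → Fin R.l → ℕ, ∀ α ∈ R.pos, α = ∑ i, (c α i : ℝ) • R.simple i := by
  classical
  refine ⟨fun α => if hα : α ∈ R.pos then (R.pos_combo α hα).choose else 0, fun α hα => ?_⟩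
  simpa only [dif_pos hα] using (R.pos_combo α hα).choose_spec

theorem sum_ne_zero_of_subset_pos {Γ : Finset V} (hΓ : Γ ⊆ R.pos) (hne : Γ.Nonempty) :
    ∑ φ ∈ Γ, φ ≠ 0 := by
  obtain ⟨c, hc⟩ := R.exists_simple_coeffs
  obtain ⟨ψ, hψ⟩ := hne
  intro h0
  rw [Finset.sum_congr rfl fun φ hφ => hc φ (hΓ hφ)] at h0
  have hcψ := R.simple_indep.coeff_eq_zero_of_sum_eq_zero_of_nonneg
    (fun _ _ _ => Nat.cast_nonneg _) h0 ψ hψ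
  refine R.root_ne_zero ψ (R.pos_subset (hΓ hψ)) ?_
  rw [hc ψ (hΓ hψ)]
  simp [hcψ]

variable {R}

theorem IsIdeal.inner_nonpos_of_mem_sdiff [DecidableEq V] {Ψ₁ Ψ₂ : Finset V}
    (h₁ : R.IsIdeal Ψ₁) (h₂ : R.IsIdeal Ψ₂) {γ δ : V} (hγ : γ ∈ Ψ₁ \ Ψ₂) (hδ : δ ∈ Ψ₂ \ Ψ₁) :
    ⟪γ, δ⟫ ≤ 0 := by
  rw [Finset.mem_sdiff] at hγ hδ
  have hγpos := h₁.1 hγ.1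
  have hδpos := h₂.1 hδ.1
  by_contra! hpos
  have hne : γ ≠ δ := by rintro rfl; exact hγ.2 hδ.1
  have hroot := R.sub_mem γ (R.pos_subset hγpos) δ (R.pos_subset hδpos) hpos hne
  by_cases hγδ : γ - δ ∈ R.pos
  · exact hγ.2 (by simpa using h₂.2 δ hδ.1 (γ - δ) hγδ (by simpa using hγpos))
  · have hδγ : δ - γ ∈ R.pos := by
      rw [← neg_sub]
      by_contra h
      exact hγδ ((R.pos_iff _ hroot).mpr h)
    exact hδ.2 (by simpa using h₁.2 γ hγ.1 (δ - γ) hδγ (by simpa using hδpos))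

theorem IsIdeal.subset_of_sum_eq {Ψ₁ Ψ₂ : Finset V} (h₁ : R.IsIdeal Ψ₁) (h₂ : R.IsIdeal Ψ₂)
    (hsum : ∑ φ ∈ Ψ₁, φ = ∑ φ ∈ Ψ₂, φ) : Ψ₁ ⊆ Ψ₂ := by
  classical
  have hsdiff := Finset.sum_sdiff_eq_sum_sdiff_iff.mpr hsum
  have hnorm : ⟪∑ γ ∈ Ψ₁ \ Ψ₂, γ, ∑ γ ∈ Ψ₁ \ Ψ₂, γ⟫ ≤ 0 :=
    calc ⟪∑ γ ∈ Ψ₁ \ Ψ₂, γ, ∑ γ ∈ Ψ₁ \ Ψ₂, γ⟫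
        = ∑ γ ∈ Ψ₁ \ Ψ₂, ∑ δ ∈ Ψ₂ \ Ψ₁, ⟪γ, δ⟫ := by
          nth_rw 2 [hsdiff]
          simp_rw [sum_inner, inner_sum]
      _ ≤ 0 := Finset.sum_nonpos fun γ hγ => Finset.sum_nonpos fun δ hδ =>
          h₁.inner_nonpos_of_mem_sdiff h₂ hγ hδ
  have hzero : ∑ γ ∈ Ψ₁ \ Ψ₂, γ = 0 :=
    inner_self_eq_zero.mp (le_antisymm hnorm real_inner_self_nonneg)
  by_contra hsub
  exact R.sum_ne_zero_of_subset_pos (Finset.sdiff_subset.trans h₁.1)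
    (Finset.sdiff_nonempty.mpr hsub) hzero

theorem IsIdeal.eq_of_sum_eq {Ψ₁ Ψ₂ : Finset V} (h₁ : R.IsIdeal Ψ₁) (h₂ : R.IsIdeal Ψ₂)
    (hsum : ∑ φ ∈ Ψ₁, φ = ∑ φ ∈ Ψ₂, φ) : Ψ₁ = Ψ₂ :=
  (h₁.subset_of_sum_eq h₂ hsum).antisymm (h₂.subset_of_sum_eq h₁ hsum.symm)

end RootSystemData

/-- **Kostant's lemma.** Two subsets of the positive roots which are both
closed under addition of positive roots and have equal root sums coincide. -/
theorem kostant_ideals_with_equal_root_sums_eq (R : RootSystemData V)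
    (Ψ₁ Ψ₂ : Finset V) (h₁ : Ψ₁ ⊆ R.pos) (h₂ : Ψ₂ ⊆ R.pos)
    (hc₁ : ∀ ψ ∈ Ψ₁, ∀ φ ∈ R.pos, ψ + φ ∈ R.pos → ψ + φ ∈ Ψ₁)
    (hc₂ : ∀ ψ ∈ Ψ₂, ∀ φ ∈ R.pos, ψ + φ ∈ R.pos → ψ + φ ∈ Ψ₂)
    (hsum : ∑ φ ∈ Ψ₁, φ = ∑ φ ∈ Ψ₂, φ) :
    Ψ₁ = Ψ₂ :=
  RootSystemData.IsIdeal.eq_of_sum_eq (R := R) ⟨h₁, hc₁⟩ ⟨h₂, hc₂⟩ hsum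
end
end

section
/- Let g be a complex simple Lie algebra with Borel subalgebra b, root system Φ with positive roots Φ₊, ρ half the sum of positive roots, and canonical inner product normalized so that ‖ρ+θ‖² − ‖ρ‖² = 1 where θ is the highest root. Then for any subset Ψ ⊆ Φ₊ one has ‖ρ + Σ_{φ∈Ψ} φ‖² − ‖ρ‖² ≤ |Ψ|, with equality if and only if the subspace a_Ψ = ⊕_{φ∈Ψ} g_φ is an abelian ideal of b. -/
open scoped RealInnerProductSpace BigOperators

noncomputable section

variable (V : Type) [NormedAddCommGroup V] [InnerProductSpace ℝ V] [FiniteDimensional ℝ V]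

/-- An irreducible root system, together with its highest root `θ`. -/
structure IrredRootSystemData extends RootSystemData V where
  /-- the highest root -/
  θ : V
  θ_mem_pos : θ ∈ pos
  θ_highest : ∀ φ ∈ pos, ∃ c : Fin l → ℕ, θ - φ = ∑ i, (c i : ℝ) • simple i
  θ_long : ∀ φ ∈ roots, ‖φ‖ ≤ ‖θ‖
  θ_dominant : ∀ i, 0 ≤ ⟪θ, simple i⟫
  irreducible : ∀ s : Finset V, s ⊆ roots →
      (∀ α ∈ s, ∀ β ∈ roots, β ∉ s → ⟪α, β⟫ = 0) → s = ∅ ∨ s = roots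

namespace IrredRootSystemData

variable {V} (R : IrredRootSystemData V)

/-- The affine functional `L(φ) = 2(θ−φ|ρ)/(θ|θ)`. -/
def L (φ : V) : ℝ := 2 * ⟪R.θ - φ, R.toRootSystemData.ρ⟫ / ⟪R.θ, R.θ⟫

/-- A root is long if it has the same length as the highest root. -/
def IsLong (φ : V) : Prop := ‖φ‖ = ‖R.θ‖

/-- The dual Coxeter number `g = ⟨ρ, θ∨⟩ + 1`. -/
def dualCox : ℝ := RootSystemData.pair R.toRootSystemData.ρ R.θ + 1

/-- The affine reflection `s₀(λ) = λ − (⟨λ,θ∨⟩ − g)θ` (scaled so that `s₀ρ = ρ + θ`). -/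
def s0 (lam : V) : V := lam - (RootSystemData.pair lam R.θ - R.dualCox) • R.θ

end IrredRootSystemData

/-!
Write `⟨Ψ⟩ = ∑_{φ ∈ Ψ} φ` and remove from `Ψ` a root `ψ` that is minimal, i.e. no `ψ - ψ'`
(`ψ' ∈ Ψ`) is a positive root. Then `‖ρ + ⟨Ψ⟩‖² - ‖ρ + ⟨Ψ∖ψ⟩‖² = 2(ρ + ⟨Ψ∖ψ⟩|ψ) + ‖ψ‖²`, and
minimality puts every `ψ' ∈ Ψ∖ψ` with `(ψ'|ψ) > 0` into the set `T(ψ)` (`acuteAbove`) of positive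
roots `β` with `β - ψ ∈ Φ₊` and `(β|ψ) > 0`. By induction on `|Ψ|` it therefore suffices that
`2(ρ + ⟨T(ψ)⟩|ψ) + ‖ψ‖² ≤ 1`, with equality iff `ψ` is square-zero (no `φ ∈ Φ₊` with
`φ + ψ ∈ Φ₊` and `φ + 2ψ ∈ Φ`); equality in the comparison `(⟨Ψ∖ψ⟩|ψ) ≤ (⟨T(ψ)⟩|ψ)` is then
exactly what the abelian ideal conditions require of `ψ`.

The normalization `‖ρ + θ‖² - ‖ρ‖² = 1` makes `( | )` dual to the Killing form:
`∑_{φ ∈ Φ} (φ|x)(φ|y) = (x|y)`. Indeed `x ↦ ∑ (φ|x) φ` commutes with the Weyl group, so each root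
is an eigenvector, irreducibility forces a single eigenvalue, and at `θ` (where `⟨φ, θ∨⟩ ∈ {0, 1}`
for `φ ∈ Φ₊∖θ`) it equals `‖ρ + θ‖² - ‖ρ‖²`. With `k_φ = ⟨φ, ψ∨⟩ ∈ {-3, …, 3}` this turns
`1 - 2(ρ + ⟨T(ψ)⟩|ψ) - ‖ψ‖²` into `‖ψ‖²/2 · (∑_{Φ₊∖ψ} (k_φ² - k_φ) - 2 ∑_{T(ψ)} k_β)`, and the
last bracket is a nonnegative count of roots on `ψ`-strings, zero exactly in the square-zero case.
-/

open scoped Finset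

theorem Finset.sum_comp_eq_sum_card_filter_smul {ι κ M : Type*} [AddCommMonoid M] [DecidableEq κ]
    {s : Finset ι} {t : Finset κ} {g : ι → κ} (h : ∀ i ∈ s, g i ∈ t) (f : κ → M) :
    ∑ i ∈ s, f (g i) = ∑ k ∈ t, #{i ∈ s | g i = k} • f k := by
  rw [← Finset.sum_fiberwise_of_maps_to h]
  refine Finset.sum_congr rfl fun k _ => ?_
  rw [Finset.sum_congr rfl fun i hi => by rw [(Finset.mem_filter.1 hi).2], Finset.sum_const]

theorem Finset.sum_le_sum_and_eq_iff_of_pos_mem {ι M : Type*} [AddCommGroup M] [LinearOrder M]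
    [IsOrderedAddMonoid M] [DecidableEq ι] {s t : Finset ι} {g : ι → M}
    (hst : ∀ x ∈ s, 0 < g x → x ∈ t) (ht : ∀ x ∈ t, 0 < g x) :
    ∑ x ∈ s, g x ≤ ∑ x ∈ t, g x ∧
      (∑ x ∈ s, g x = ∑ x ∈ t, g x ↔ t ⊆ s ∧ ∀ x ∈ s, 0 ≤ g x) := by
  have hs := Finset.sum_inter_add_sum_sdiff s t g
  have ht' := Finset.sum_inter_add_sum_sdiff t s g
  rw [Finset.inter_comm] at ht'
  have hneg : ∀ x ∈ s \ t, g x ≤ 0 := fun x hx => by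
    obtain ⟨hxs, hxt⟩ := Finset.mem_sdiff.1 hx
    exact not_lt.1 fun h => hxt (hst x hxs h)
  have hpos : ∀ x ∈ t \ s, 0 < g x := fun x hx => ht x (Finset.mem_sdiff.1 hx).1
  have h₁ := Finset.sum_nonpos hneg
  have h₂ := Finset.sum_nonneg fun x hx => (hpos x hx).le
  refine ⟨by rw [← hs, ← ht']; exact add_le_add_right (h₁.trans h₂) _, ?_⟩
  rw [← hs, ← ht', add_right_inj]
  constructor
  · intro h
    have hB : ∑ x ∈ t \ s, g x = 0 := le_antisymm (h ▸ h₁) h₂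
    refine ⟨Finset.sdiff_eq_empty_iff_subset.1 ?_, fun x hx => ?_⟩
    · by_contra hne
      exact (Finset.sum_pos hpos (Finset.nonempty_iff_ne_empty.2 hne)).ne' hB
    · by_cases hxt : x ∈ t
      · exact (ht x hxt).le
      · exact ((Finset.sum_eq_zero_iff_of_nonpos hneg).1 (h.trans hB) x
          (Finset.mem_sdiff.2 ⟨hx, hxt⟩)).ge
  · rintro ⟨hts, hnn⟩
    rw [Finset.sdiff_eq_empty_iff_subset.2 hts, Finset.sum_empty]
    exact Finset.sum_eq_zero fun x hx =>
      le_antisymm (hneg x hx) (hnn x (Finset.mem_sdiff.1 hx).1)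

namespace RootSystemData

open Classical

variable {V : Type} [NormedAddCommGroup V] [InnerProductSpace ℝ V]

theorem pair_add_left (x y α : V) : pair (x + y) α = pair x α + pair y α := by
  simp only [pair, inner_add_left, mul_add, add_div]

theorem pair_sub_left (x y α : V) : pair (x - y) α = pair x α - pair y α := by
  simp only [pair, inner_sub_left, mul_sub, sub_div]

theorem pair_smul_left (c : ℝ) (x α : V) : pair (c • x) α = c * pair x α := by
  simp only [pair, real_inner_smul_left, mul_div_assoc, mul_left_comm]

theorem pair_neg_left (x α : V) : pair (-x) α = -pair x α := by
  simp only [pair, inner_neg_left, mul_neg, neg_div]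

theorem pair_self {α : V} (hα : α ≠ 0) : pair α α = 2 := by
  rw [pair, mul_div_assoc, div_self (inner_self_ne_zero.2 hα), mul_one]

theorem pair_mul_inner_self (x : V) {α : V} (hα : α ≠ 0) : pair x α * ⟪α, α⟫ = 2 * ⟪x, α⟫ :=
  div_mul_cancel₀ _ (inner_self_ne_zero.2 hα)

theorem pair_pos_iff {x α : V} (hα : α ≠ 0) : 0 < pair x α ↔ 0 < ⟪x, α⟫ := by
  rw [pair, div_pos_iff_of_pos_right (real_inner_self_pos.2 hα)]
  constructor <;> intro h <;> linarith

theorem pair_neg_iff {x α : V} (hα : α ≠ 0) : pair x α < 0 ↔ ⟪x, α⟫ < 0 := by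
  rw [pair, div_lt_iff₀ (real_inner_self_pos.2 hα), zero_mul]
  constructor <;> intro h <;> linarith

theorem sRefl_apply (α x : V) : sRefl α x = x - pair x α • α := by
  rw [sRefl, Submodule.reflection_orthogonal_apply, Submodule.reflection_singleton_apply, pair,
    real_inner_self_eq_norm_sq, real_inner_comm, neg_sub, two_smul, ← add_smul, mul_div_assoc,
    two_mul]
  rfl

variable (R : RootSystemData V) {Ψ : Finset V} {α β γ φ ψ σ x : V} {k : ℝ}

theorem neg_notMem_pos (hα : α ∈ R.pos) : -α ∉ R.pos :=
  (R.pos_iff α (R.pos_subset hα)).1 hα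

theorem neg_mem_pos_of_notMem (hx : x ∈ R.roots) (h : x ∉ R.pos) : -x ∈ R.pos := by
  by_contra h'
  exact h ((R.pos_iff x hx).2 h')

theorem ne_neg_of_mem_pos (hα : α ∈ R.pos) (hβ : β ∈ R.pos) : α ≠ -β := by
  rintro rfl
  exact R.neg_notMem_pos hβ hα

theorem sRefl_mem (hα : α ∈ R.roots) (hx : x ∈ R.roots) : sRefl α x ∈ R.roots := by
  rw [sRefl_apply]
  exact R.reflect_mem α hα x hx

theorem sub_smul_mem_of_pair_eq (hα : α ∈ R.roots) (hx : x ∈ R.roots)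
    (h : pair x α = k) : x - k • α ∈ R.roots :=
  h ▸ R.reflect_mem α hα x hx

theorem add_self_notMem (hα : α ∈ R.roots) : α + α ∉ R.roots := fun h => by
  rcases R.reduced α hα 2 (by rwa [two_smul]) with h2 | h2 <;> norm_num at h2

theorem exists_linearMap_pos : ∃ f : V →ₗ[ℝ] ℝ, ∀ α ∈ R.pos, 0 < f α := by
  obtain ⟨g, hg⟩ := LinearMap.exists_leftInverse_of_injective
    (Fintype.linearCombination ℝ R.simple)
    (LinearMap.ker_eq_bot.2 R.simple_indep.fintypeLinearCombination_injective)
  refine ⟨Fintype.linearCombination ℝ (fun _ => (1 : ℝ)) ∘ₗ g, fun α hα => ?_⟩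
  obtain ⟨c, rfl⟩ := R.pos_combo α hα
  have hgc : g (∑ i, (c i : ℝ) • R.simple i) = fun i => (c i : ℝ) := by
    rw [← Fintype.linearCombination_apply, ← LinearMap.comp_apply, hg, LinearMap.id_apply]
  rw [LinearMap.comp_apply, hgc, Fintype.linearCombination_apply]
  simp only [smul_eq_mul, mul_one]
  refine lt_of_le_of_ne (by positivity) fun h => R.root_ne_zero _ (R.pos_subset hα) ?_
  have hc := (Finset.sum_eq_zero_iff_of_nonneg (fun i _ => Nat.cast_nonneg (c i))).1 h.symm
  exact Finset.sum_eq_zero fun i hi => by rw [hc i hi, zero_smul]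

theorem add_mem_pos (hα : α ∈ R.pos) (hβ : β ∈ R.pos) (h : α + β ∈ R.roots) :
    α + β ∈ R.pos := by
  obtain ⟨f, hf⟩ := R.exists_linearMap_pos
  refine (R.pos_iff _ h).2 fun hneg => ?_
  have := hf _ hneg
  rw [map_neg, map_add] at this
  linarith [hf α hα, hf β hβ]

theorem exists_minimal (hne : Ψ.Nonempty) :
    ∃ ψ ∈ Ψ, ∀ ψ' ∈ Ψ, ψ - ψ' ∉ R.pos := by
  obtain ⟨f, hf⟩ := R.exists_linearMap_pos
  obtain ⟨ψ, hψ, hmin⟩ := Ψ.exists_min_image f hne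
  refine ⟨ψ, hψ, fun ψ' hψ' hsub => ?_⟩
  have := hf _ hsub
  rw [map_sub] at this
  linarith [hmin ψ' hψ']

theorem add_mem_of_inner_neg (hα : α ∈ R.roots) (hβ : β ∈ R.roots) (h : ⟪α, β⟫ < 0)
    (hne : α ≠ -β) : α + β ∈ R.roots := by
  simpa using R.sub_mem α hα (-β) (R.neg_mem β hβ) (by rwa [inner_neg_right, neg_pos]) hne

theorem add_mem_pos_of_inner_neg (hα : α ∈ R.pos) (hβ : β ∈ R.pos) (h : ⟪α, β⟫ < 0) :
    α + β ∈ R.pos :=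
  R.add_mem_pos hα hβ <| R.add_mem_of_inner_neg (R.pos_subset hα) (R.pos_subset hβ) h
    (R.ne_neg_of_mem_pos hα hβ)

theorem add_mem_pos_of_pair_neg (hψ : ψ ∈ R.pos) (hφ : φ ∈ R.pos) (h : pair φ ψ < 0) :
    ψ + φ ∈ R.pos := by
  refine R.add_mem_pos_of_inner_neg hψ hφ ?_
  rw [real_inner_comm]
  exact (pair_neg_iff (R.root_ne_zero _ (R.pos_subset hψ))).1 h

theorem pair_mul_pair_lt_four (hα : α ∈ R.roots) (hβ : β ∈ R.roots) (h₁ : α ≠ β)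
    (h₂ : α ≠ -β) : pair α β * pair β α < 4 := by
  have hα0 := R.root_ne_zero α hα
  have hβ0 := R.root_ne_zero β hβ
  have hcs : |⟪β, α⟫| < ‖β‖ * ‖α‖ := by
    refine (abs_real_inner_le_norm β α).lt_of_ne fun h => ?_
    obtain ⟨r, -, rfl⟩ := (norm_inner_eq_norm_iff (𝕜 := ℝ) hβ0 hα0).1 (by rwa [Real.norm_eq_abs])
    rcases R.reduced β hβ r hα with rfl | rfl
    · exact h₁ (one_smul ℝ β)
    · exact h₂ (neg_one_smul ℝ β)
  have key : pair α β * pair β α = 4 * ⟪β, α⟫ ^ 2 / (‖α‖ ^ 2 * ‖β‖ ^ 2) := by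
    simp only [pair, real_inner_self_eq_norm_sq, real_inner_comm α β]
    field_simp
    ring
  rw [key, div_lt_iff₀ (by positivity)]
  have := pow_lt_pow_left₀ hcs (abs_nonneg _) two_ne_zero
  rw [sq_abs] at this
  nlinarith

theorem pair_mul_inner_self_comm (hα : α ∈ R.roots) (hβ : β ∈ R.roots) :
    pair α β * ⟪β, β⟫ = pair β α * ⟪α, α⟫ := by
  rw [pair_mul_inner_self _ (R.root_ne_zero β hβ), pair_mul_inner_self _ (R.root_ne_zero α hα),
    real_inner_comm]

theorem exists_int_pair_eq (hα : α ∈ R.roots) (hβ : β ∈ R.roots) (h₁ : α ≠ β)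
    (h₂ : α ≠ -β) : ∃ n : ℤ, |n| ≤ 3 ∧ pair α β = n := by
  obtain ⟨m, hm⟩ := R.crystal β hβ α hα
  obtain ⟨n, hn⟩ := R.crystal α hα β hβ
  have hlt := R.pair_mul_pair_lt_four hα hβ h₁ h₂
  have hcomm := R.pair_mul_inner_self_comm hα hβ
  have hαα := real_inner_self_pos.2 (R.root_ne_zero α hα)
  have hββ := real_inner_self_pos.2 (R.root_ne_zero β hβ)
  simp only [pair] at hlt hcomm
  rw [hm, hn] at hlt hcomm
  have hmn : m * n < 4 := by exact_mod_cast hlt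
  have hmn_pos : m ≠ 0 → 0 < m * n := fun hm0 => by
    have hsq : (0 : ℝ) < m ^ 2 * ⟪β, β⟫ := by positivity
    have key : (m * n : ℝ) * ⟪α, α⟫ = m ^ 2 * ⟪β, β⟫ := by linear_combination (-(m : ℝ)) * hcomm
    have : (0 : ℝ) < m * n := by
      by_contra! h
      nlinarith
    exact_mod_cast this
  refine ⟨m, ?_, hm⟩
  by_contra! h
  have hm0 : m ≠ 0 := by rintro rfl; simp at h
  have hn0 : n ≠ 0 := by rintro rfl; simpa using hmn_pos hm0
  nlinarith [abs_mul m n, abs_of_pos (hmn_pos hm0), Int.one_le_abs hn0]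

theorem exists_int_pair_eq_of_mem_erase (hψ : ψ ∈ R.pos) (hφ : φ ∈ R.pos.erase ψ) :
    ∃ n : ℤ, |n| ≤ 3 ∧ pair φ ψ = n :=
  R.exists_int_pair_eq (R.pos_subset (Finset.mem_of_mem_erase hφ)) (R.pos_subset hψ)
    (Finset.ne_of_mem_erase hφ) (R.ne_neg_of_mem_pos (Finset.mem_of_mem_erase hφ) hψ)

theorem sum_roots_eq_two_mul_sum_pos (f : V → ℝ) (hf : ∀ x, f (-x) = f x) :
    ∑ φ ∈ R.roots, f φ = 2 * ∑ φ ∈ R.pos, f φ := by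
  rw [← Finset.sum_filter_add_sum_filter_not R.roots (· ∈ R.pos), Finset.filter_mem_eq_inter,
    Finset.inter_eq_right.2 R.pos_subset, two_mul]
  congr 1
  refine Finset.sum_nbij' Neg.neg Neg.neg (fun φ hφ => ?_) (fun φ hφ => ?_) (fun φ _ => neg_neg φ)
    (fun φ _ => neg_neg φ) (fun φ _ => (hf φ).symm)
  · obtain ⟨hφr, hφ⟩ := Finset.mem_filter.1 hφ
    exact R.neg_mem_pos_of_notMem hφr hφ
  · exact Finset.mem_filter.2 ⟨R.neg_mem φ (R.pos_subset hφ), R.neg_notMem_pos hφ⟩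

theorem two_inner_ρ (x : V) : 2 * ⟪R.ρ, x⟫ = ∑ φ ∈ R.pos, ⟪φ, x⟫ := by
  rw [ρ, real_inner_smul_left, sum_inner, mul_inv_cancel_left₀ two_ne_zero]

def casimir (x : V) : V := ∑ φ ∈ R.roots, ⟪φ, x⟫ • φ

theorem inner_casimir (x y : V) : ⟪R.casimir x, y⟫ = ∑ φ ∈ R.roots, ⟪φ, x⟫ * ⟪φ, y⟫ := by
  simp only [casimir, sum_inner, real_inner_smul_left]

theorem inner_casimir_comm (x y : V) : ⟪R.casimir x, y⟫ = ⟪x, R.casimir y⟫ := by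
  rw [← real_inner_comm x, inner_casimir, inner_casimir]
  exact Finset.sum_congr rfl fun φ _ => mul_comm _ _

theorem sRefl_casimir (hγ : γ ∈ R.roots) : sRefl γ (R.casimir γ) = -R.casimir γ := by
  set s := sRefl γ
  have hsγ : s γ = -γ := Submodule.reflection_orthogonalComplement_singleton_eq_neg γ
  have hss : ∀ x, s (s x) = x := Submodule.reflection_reflection _
  have hinner : ∀ x, ⟪s x, γ⟫ = -⟪x, γ⟫ := fun x => by
    rw [← LinearIsometryEquiv.inner_map_map s, hss, hsγ,
      inner_neg_right]
  calc s (R.casimir γ) = ∑ φ ∈ R.roots, ⟪φ, γ⟫ • s φ := by simp only [casimir, map_sum, map_smul]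
    _ = ∑ φ ∈ R.roots, -⟪φ, γ⟫ • φ :=
      Finset.sum_nbij' s s (fun φ hφ => R.sRefl_mem hγ hφ) (fun φ hφ => R.sRefl_mem hγ hφ)
        (fun φ _ => hss φ) (fun φ _ => hss φ) (fun φ _ => by rw [hinner, neg_neg])
    _ = -R.casimir γ := by simp only [casimir, neg_smul, Finset.sum_neg_distrib]

theorem exists_smul_eq_casimir (hγ : γ ∈ R.roots) : ∃ c : ℝ, c • γ = R.casimir γ := by
  have h := R.sRefl_casimir hγ
  rw [sRefl, Submodule.reflection_orthogonal_apply, neg_inj, Submodule.reflection_eq_self_iff] at h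
  exact Submodule.mem_span_singleton.1 h

-- `(ad e_ψ)²` vanishes on the nilradical of `b`.
def IsSquareZero (ψ : V) : Prop :=
  ∀ φ ∈ R.pos, ψ + φ ∈ R.pos → ψ + (ψ + φ) ∉ R.roots

def level (ψ : V) (k : ℝ) : Finset V := {φ ∈ R.pos.erase ψ | pair φ ψ = k}

def acuteAbove (ψ : V) : Finset V := {β ∈ R.pos | β - ψ ∈ R.pos ∧ 0 < ⟪β, ψ⟫}

theorem mem_level : φ ∈ R.level ψ k ↔ φ ≠ ψ ∧ φ ∈ R.pos ∧ pair φ ψ = k := by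
  simp only [level, Finset.mem_filter, Finset.mem_erase, and_assoc]

theorem mem_level_of_ne_two (hψ : ψ ∈ R.pos) (hk : k ≠ 2) :
    φ ∈ R.level ψ k ↔ φ ∈ R.pos ∧ pair φ ψ = k := by
  rw [mem_level]
  refine ⟨fun h => h.2, fun h => ⟨?_, h⟩⟩
  rintro rfl
  exact hk (h.2 ▸ pair_self (R.root_ne_zero _ (R.pos_subset hψ)))

theorem mem_acuteAbove : β ∈ R.acuteAbove ψ ↔ β ∈ R.pos ∧ β - ψ ∈ R.pos ∧ 0 < ⟪β, ψ⟫ := by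
  simp only [acuteAbove, Finset.mem_filter]

theorem sum_sq_sub_pair_eq (hψ : ψ ∈ R.pos) :
    ∑ φ ∈ R.pos.erase ψ, (pair φ ψ ^ 2 - pair φ ψ) =
      12 * #(R.level ψ (-3)) + 6 * #(R.level ψ (-2)) + 2 * #(R.level ψ (-1)) +
        2 * #(R.level ψ 2) + 6 * #(R.level ψ 3) := by
  have hmaps : ∀ φ ∈ R.pos.erase ψ, pair φ ψ ∈ ({-3, -2, -1, 0, 1, 2, 3} : Finset ℝ) := by
    intro φ hφ
    obtain ⟨n, hn, h⟩ := R.exists_int_pair_eq_of_mem_erase hψ hφ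
    obtain ⟨h₁, h₂⟩ := abs_le.1 hn
    rw [h]
    interval_cases n <;> norm_num
  refine (Finset.sum_comp_eq_sum_card_filter_smul hmaps fun k => k ^ 2 - k).trans ?_
  norm_num [level, Finset.sum_insert]
  ring

theorem filter_acuteAbove_pair_eq (hψ : ψ ∈ R.pos) (hk : 0 < k) :
    {β ∈ R.acuteAbove ψ | pair β ψ = k} = {β ∈ R.level ψ k | β - ψ ∈ R.pos} := by
  ext β
  simp only [Finset.mem_filter, mem_acuteAbove, mem_level]
  constructor
  · rintro ⟨⟨hβ, hsub, -⟩, rfl⟩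
    refine ⟨⟨?_, hβ, rfl⟩, hsub⟩
    rintro rfl
    exact R.root_ne_zero _ (R.pos_subset hsub) (sub_self β)
  · rintro ⟨⟨-, hβ, rfl⟩, hsub⟩
    exact ⟨⟨hβ, hsub, (pair_pos_iff (R.root_ne_zero _ (R.pos_subset hψ))).1 hk⟩, rfl⟩

theorem sum_pair_acuteAbove_eq (hψ : ψ ∈ R.pos) :
    ∑ β ∈ R.acuteAbove ψ, pair β ψ =
      #{β ∈ R.level ψ 1 | β - ψ ∈ R.pos} + 2 * #{β ∈ R.level ψ 2 | β - ψ ∈ R.pos} +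
        3 * #{β ∈ R.level ψ 3 | β - ψ ∈ R.pos} := by
  have hmaps : ∀ β ∈ R.acuteAbove ψ, pair β ψ ∈ ({1, 2, 3} : Finset ℝ) := by
    intro β hβ
    obtain ⟨hβp, hsub, hpos⟩ := (R.mem_acuteAbove).1 hβ
    have hne : β ≠ ψ := by
      rintro rfl
      exact R.root_ne_zero _ (R.pos_subset hsub) (sub_self β)
    obtain ⟨n, hn, h⟩ := R.exists_int_pair_eq_of_mem_erase hψ (Finset.mem_erase.2 ⟨hne, hβp⟩)
    have h0 : (0 : ℝ) < n := h ▸ (pair_pos_iff (R.root_ne_zero _ (R.pos_subset hψ))).2 hpos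
    obtain ⟨-, h₂⟩ := abs_le.1 hn
    have h₁ : 0 < n := by exact_mod_cast h0
    rw [h]
    interval_cases n <;> norm_num
  refine (Finset.sum_comp_eq_sum_card_filter_smul hmaps id).trans ?_
  norm_num [Finset.sum_insert, R.filter_acuteAbove_pair_eq hψ]
  ring

theorem card_level_neg_one (hψ : ψ ∈ R.pos) :
    #(R.level ψ (-1)) = #{β ∈ R.level ψ 1 | β - ψ ∈ R.pos} := by
  have hψ0 := R.root_ne_zero _ (R.pos_subset hψ)
  refine Finset.card_nbij' (ψ + ·) (· - ψ) (fun φ hφ => ?_) (fun β hβ => ?_)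
    (fun φ _ => add_sub_cancel_left ψ φ) (fun β _ => add_sub_cancel ψ β)
  · obtain ⟨hφp, hk⟩ := (R.mem_level_of_ne_two hψ (by norm_num)).1 hφ
    refine Finset.mem_filter.2 ⟨(R.mem_level_of_ne_two hψ (by norm_num)).2 ⟨?_, ?_⟩, by simpa⟩
    · exact R.add_mem_pos_of_pair_neg hψ hφp (by rw [hk]; norm_num)
    · rw [pair_add_left, pair_self hψ0, hk]
      norm_num
  · obtain ⟨hβ1, hsub⟩ := Finset.mem_filter.1 hβ
    obtain ⟨-, hk⟩ := (R.mem_level_of_ne_two hψ (by norm_num)).1 hβ1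
    refine (R.mem_level_of_ne_two hψ (by norm_num)).2 ⟨hsub, ?_⟩
    rw [pair_sub_left, pair_self hψ0, hk]
    norm_num

theorem card_level_two_sub_notMem (hψ : ψ ∈ R.pos) :
    #{β ∈ R.level ψ 2 | β - ψ ∉ R.pos} =
      #{β ∈ R.level ψ 2 | β - ψ ∈ R.pos ∧ (2 : ℝ) • ψ - β ∈ R.pos} := by
  have hψ0 := R.root_ne_zero _ (R.pos_subset hψ)
  have hk' : ∀ β, pair β ψ = 2 → pair ((2 : ℝ) • ψ - β) ψ = 2 := fun β hk => by
    rw [pair_sub_left, pair_smul_left, pair_self hψ0, hk]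
    norm_num
  refine Finset.card_nbij' ((2 : ℝ) • ψ - ·) ((2 : ℝ) • ψ - ·) (fun β hβ => ?_) (fun β hβ => ?_)
    (fun β _ => sub_sub_cancel _ β) (fun β _ => sub_sub_cancel _ β)
  · obtain ⟨hβ2, hsub⟩ := Finset.mem_filter.1 hβ
    obtain ⟨hne, hβp, hk⟩ := R.mem_level.1 hβ2
    have hsubr : β - ψ ∈ R.roots := R.sub_mem β (R.pos_subset hβp) ψ (R.pos_subset hψ)
      ((pair_pos_iff hψ0).1 (by rw [hk]; norm_num)) hne
    have hψβ : ψ - β ∈ R.pos := by simpa using R.neg_mem_pos_of_notMem hsubr hsub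
    have hr : ψ + (ψ - β) ∈ R.roots := by
      convert R.neg_mem _ (R.sub_smul_mem_of_pair_eq (R.pos_subset hψ) (R.pos_subset hβp) hk)
        using 1
      module
    refine Finset.mem_filter.2 ⟨R.mem_level.2 ⟨fun h => hne ?_, ?_, hk' β hk⟩, ?_, by simpa⟩
    · linear_combination (norm := module) -h
    · convert R.add_mem_pos hψ hψβ hr using 1
      module
    · convert hψβ using 1
      module
  · obtain ⟨hβ2, hsub, hrefl⟩ := Finset.mem_filter.1 hβ
    obtain ⟨hne, -, hk⟩ := R.mem_level.1 hβ2
    refine Finset.mem_filter.2 ⟨R.mem_level.2 ⟨fun h => hne ?_, hrefl, hk' β hk⟩, ?_⟩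
    · linear_combination (norm := module) -h
    · rw [show (2 : ℝ) • ψ - β - ψ = -(β - ψ) by module]
      exact R.neg_notMem_pos hsub

theorem card_level_two_le (hψ : ψ ∈ R.pos) :
    #{β ∈ R.level ψ 2 | β - ψ ∈ R.pos ∧ (2 : ℝ) • ψ - β ∉ R.pos} ≤ #(R.level ψ (-2)) := by
  refine Finset.card_le_card_of_injOn (· - (2 : ℝ) • ψ) (fun β hβ => ?_)
    (fun β _ γ _ h => sub_left_injective h)
  obtain ⟨hβ2, -, hneg⟩ := Finset.mem_filter.1 hβ
  obtain ⟨-, hβp, hk⟩ := R.mem_level.1 hβ2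
  have hr := R.sub_smul_mem_of_pair_eq (R.pos_subset hψ) (R.pos_subset hβp) hk
  refine (R.mem_level_of_ne_two hψ (by norm_num)).2 ⟨(R.pos_iff _ hr).2 (by rwa [neg_sub]), ?_⟩
  rw [pair_sub_left, pair_smul_left, pair_self (R.root_ne_zero _ (R.pos_subset hψ)), hk]
  norm_num

variable {R} in
theorem IsSquareZero.level_eq_empty (hψ : ψ ∈ R.pos) (hsz : R.IsSquareZero ψ) :
    R.level ψ (-3) = ∅ ∧ R.level ψ (-2) = ∅ ∧ ∀ β ∈ R.level ψ 3, β - ψ ∈ R.pos := by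
  have hψr := R.pos_subset hψ
  have hψ0 := R.root_ne_zero _ hψr
  refine ⟨Finset.eq_empty_of_forall_notMem fun φ hφ => ?_,
    Finset.eq_empty_of_forall_notMem fun φ hφ => ?_, fun β hβ => ?_⟩
  · obtain ⟨hφp, hk⟩ := (R.mem_level_of_ne_two hψ (by norm_num)).1 hφ
    have hr := R.sub_smul_mem_of_pair_eq hψr (R.pos_subset hφp) hk
    have hk' : pair (φ - (-3 : ℝ) • ψ) ψ = 3 := by
      rw [pair_sub_left, pair_smul_left, pair_self hψ0, hk]
      norm_num
    have hne : φ - (-3 : ℝ) • ψ ≠ ψ := fun h => by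
      rw [h, pair_self hψ0] at hk'
      norm_num at hk'
    have := R.sub_mem _ hr ψ hψr ((pair_pos_iff hψ0).1 (by rw [hk']; norm_num)) hne
    refine hsz φ hφp (R.add_mem_pos_of_pair_neg hψ hφp (by rw [hk]; norm_num)) ?_
    convert this using 1
    module
  · obtain ⟨hφp, hk⟩ := (R.mem_level_of_ne_two hψ (by norm_num)).1 hφ
    refine hsz φ hφp (R.add_mem_pos_of_pair_neg hψ hφp (by rw [hk]; norm_num)) ?_
    convert R.sub_smul_mem_of_pair_eq hψr (R.pos_subset hφp) hk using 1
    module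
  · obtain ⟨hne, hβp, hk⟩ := R.mem_level.1 hβ
    have hsubr := R.sub_mem β (R.pos_subset hβp) ψ hψr
      ((pair_pos_iff hψ0).1 (by rw [hk]; norm_num)) hne
    by_contra hsub
    have hγ : ψ - β ∈ R.pos := by simpa using R.neg_mem_pos_of_notMem hsubr hsub
    have hkγ : pair (ψ - β) ψ < 0 := by
      rw [pair_sub_left, pair_self hψ0, hk]
      norm_num
    refine hsz _ hγ (R.add_mem_pos_of_pair_neg hψ hγ hkγ) ?_
    convert R.neg_mem _ (R.sub_smul_mem_of_pair_eq hψr (R.pos_subset hβp) hk) using 1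
    module

theorem exists_pair_eq_of_add_add_mem (hψ : ψ ∈ R.pos) (hφ : φ ∈ R.pos) (hsum : ψ + φ ∈ R.pos)
    (hroot : ψ + (ψ + φ) ∈ R.roots) : ∃ n : ℤ, -3 ≤ n ∧ n ≤ -1 ∧ pair φ ψ = n := by
  have hψr := R.pos_subset hψ
  have hψ0 := R.root_ne_zero _ hψr
  have hne : φ ≠ ψ := by
    rintro rfl
    exact R.add_self_notMem hψr (R.pos_subset hsum)
  obtain ⟨n, hn, hk⟩ := R.exists_int_pair_eq_of_mem_erase hψ (Finset.mem_erase.2 ⟨hne, hφ⟩)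
  have hkx : pair (ψ + (ψ + φ)) ψ = n + 4 := by
    rw [pair_add_left, pair_add_left, pair_self hψ0, hk]
    ring
  have hx₁ : ψ + (ψ + φ) ≠ ψ := fun h =>
    R.ne_neg_of_mem_pos hφ hψ (by linear_combination (norm := module) h)
  have hx₂ : ψ + (ψ + φ) ≠ -ψ := fun h => by
    rw [h, pair_neg_left, pair_self hψ0] at hkx
    have : n = -6 := by exact_mod_cast (by linarith : (n : ℝ) = -6)
    rw [this] at hn
    norm_num at hn
  obtain ⟨m, hm, hkm⟩ := R.exists_int_pair_eq hroot hψr hx₁ hx₂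
  have hnm : m = n + 4 := by exact_mod_cast hkm.symm.trans hkx
  rw [abs_le] at hn hm
  exact ⟨n, by omega, by omega, hk⟩

theorem isSquareZero_of_level_eq_empty (hψ : ψ ∈ R.pos) (h₃ : R.level ψ (-3) = ∅)
    (h₂ : R.level ψ (-2) = ∅) (hup : ∀ β ∈ R.level ψ 3, β - ψ ∈ R.pos) : R.IsSquareZero ψ := by
  intro φ hφ hsum hroot
  have hψr := R.pos_subset hψ
  have hψ0 := R.root_ne_zero _ hψr
  have hnot : ∀ {k : ℝ} {x : V}, R.level ψ k = ∅ → k ≠ 2 → x ∈ R.pos → pair x ψ = k → False :=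
    fun hk hk2 hx hkx => Finset.eq_empty_iff_forall_notMem.1 hk _
      ((R.mem_level_of_ne_two hψ hk2).2 ⟨hx, hkx⟩)
  obtain ⟨n, hn₁, hn₂, hk⟩ := R.exists_pair_eq_of_add_add_mem hψ hφ hsum hroot
  obtain rfl | rfl | rfl : n = -3 ∨ n = -2 ∨ n = -1 := by omega
  · exact hnot h₃ (by norm_num) hφ (by rw [hk]; norm_num)
  · exact hnot h₂ (by norm_num) hφ (by rw [hk]; norm_num)
  · have hk3 : pair (ψ + (ψ + φ)) ψ = 3 := by
      rw [pair_add_left, pair_add_left, pair_self hψ0, hk]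
      norm_num
    have hr : φ - ψ ∈ R.roots := by
      convert R.sub_smul_mem_of_pair_eq hψr hroot hk3 using 1
      module
    by_cases hpos : φ - ψ ∈ R.pos
    · exact hnot h₃ (by norm_num) hpos (by rw [pair_sub_left, pair_self hψ0, hk]; norm_num)
    · have hγ : ψ - φ ∈ R.pos := by simpa using R.neg_mem_pos_of_notMem hr hpos
      have := hup _ ((R.mem_level_of_ne_two hψ (by norm_num)).2 ⟨hγ, by
        rw [pair_sub_left, pair_self hψ0, hk]
        norm_num⟩)
      exact R.neg_notMem_pos hφ (by simpa using this)

theorem isSquareZero_iff (hψ : ψ ∈ R.pos) :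
    R.IsSquareZero ψ ↔
      R.level ψ (-3) = ∅ ∧ R.level ψ (-2) = ∅ ∧ ∀ β ∈ R.level ψ 3, β - ψ ∈ R.pos :=
  ⟨fun hsz => hsz.level_eq_empty hψ, fun ⟨h₃, h₂, hup⟩ =>
    R.isSquareZero_of_level_eq_empty hψ h₃ h₂ hup⟩

theorem two_mul_sum_pair_acuteAbove_le (hψ : ψ ∈ R.pos) :
    2 * ∑ β ∈ R.acuteAbove ψ, pair β ψ ≤ ∑ φ ∈ R.pos.erase ψ, (pair φ ψ ^ 2 - pair φ ψ) ∧
      (2 * ∑ β ∈ R.acuteAbove ψ, pair β ψ = ∑ φ ∈ R.pos.erase ψ, (pair φ ψ ^ 2 - pair φ ψ) ↔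
        R.IsSquareZero ψ) := by
  have hsplit := Finset.card_filter_add_card_filter_not
    (s := {β ∈ R.level ψ 2 | β - ψ ∈ R.pos}) fun β => (2 : ℝ) • ψ - β ∈ R.pos
  simp only [Finset.filter_filter] at hsplit
  have h₁ := R.card_level_neg_one hψ
  have h₂ := Finset.card_filter_add_card_filter_not (s := R.level ψ 2) (· - ψ ∈ R.pos)
  have h₃ := R.card_level_two_sub_notMem hψ
  have h₄ := R.card_level_two_le hψ
  have h₅ := Finset.card_filter_le (R.level ψ 3) (· - ψ ∈ R.pos)
  rw [R.sum_pair_acuteAbove_eq hψ, R.sum_sq_sub_pair_eq hψ, R.isSquareZero_iff hψ,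
    ← Finset.card_eq_zero, ← Finset.card_eq_zero, ← Finset.card_filter_eq_iff]
  -- With `nₖ = #(level ψ k)`, the right side minus the left is
  -- `12 n₋₃ + 6 n₋₂ + 6 (n₃ - #{β ∈ level ψ 3 | β - ψ ∈ Φ₊}) - 2 c` with `c ≤ n₋₂` as in `h₄`.
  -- The `set`s keep `norm_cast` away from the real literals inside `level ψ (-k)`.
  set n₃ := #(R.level ψ (-3))
  set n₂ := #(R.level ψ (-2))
  set n₁ := #(R.level ψ (-1))
  constructor
  · norm_cast
    omega
  · norm_cast
    omega

def IsAbelianIdeal (Ψ : Finset V) : Prop :=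
  (∀ ψ ∈ Ψ, ∀ φ ∈ R.pos, ψ + φ ∈ R.pos → ψ + φ ∈ Ψ) ∧ ∀ ψ₁ ∈ Ψ, ∀ ψ₂ ∈ Ψ, ψ₁ + ψ₂ ∉ R.pos

variable {R} in
theorem IsAbelianIdeal.erase (h : R.IsAbelianIdeal Ψ) (hmin : ∀ ψ' ∈ Ψ, ψ - ψ' ∉ R.pos) :
    R.IsAbelianIdeal (Ψ.erase ψ) := by
  refine ⟨fun σ hσ φ hφ hsum => Finset.mem_erase.2 ⟨fun he => ?_,
    h.1 σ (Finset.mem_of_mem_erase hσ) φ hφ hsum⟩, fun σ₁ h₁ σ₂ h₂ =>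
    h.2 σ₁ (Finset.mem_of_mem_erase h₁) σ₂ (Finset.mem_of_mem_erase h₂)⟩
  refine hmin σ (Finset.mem_of_mem_erase hσ) ?_
  rwa [← he, add_sub_cancel_left]

variable {R} in
theorem IsAbelianIdeal.isSquareZero (hΨ : Ψ ⊆ R.pos) (h : R.IsAbelianIdeal Ψ) (hψ : ψ ∈ Ψ) :
    R.IsSquareZero ψ := fun φ hφ hsum hroot =>
  h.2 ψ hψ (ψ + φ) (h.1 ψ hψ φ hφ hsum) (R.add_mem_pos (hΨ hψ) hsum hroot)

variable {R} in
theorem IsAbelianIdeal.acuteAbove_subset (h : R.IsAbelianIdeal Ψ) (hψ : ψ ∈ Ψ) :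
    R.acuteAbove ψ ⊆ Ψ.erase ψ := fun β hβ => by
  obtain ⟨hβp, hsub, -⟩ := R.mem_acuteAbove.1 hβ
  refine Finset.mem_erase.2 ⟨?_, by simpa using h.1 ψ hψ (β - ψ) hsub (by simpa using hβp)⟩
  rintro rfl
  exact R.root_ne_zero _ (R.pos_subset hsub) (sub_self β)

variable {R} in
theorem IsAbelianIdeal.inner_nonneg (hΨ : Ψ ⊆ R.pos) (h : R.IsAbelianIdeal Ψ) (hψ : ψ ∈ Ψ)
    (hσ : σ ∈ Ψ) : 0 ≤ ⟪σ, ψ⟫ :=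
  not_lt.1 fun hneg => h.2 σ hσ ψ hψ (R.add_mem_pos_of_inner_neg (hΨ hσ) (hΨ hψ) hneg)

variable {R} in
theorem IsSquareZero.add_mem_acuteAbove (hψ : ψ ∈ R.pos) (hsz : R.IsSquareZero ψ)
    (hφ : φ ∈ R.pos) (hsum : ψ + φ ∈ R.pos) : ψ + φ ∈ R.acuteAbove ψ := by
  have hψ0 := R.root_ne_zero _ (R.pos_subset hψ)
  have hne : φ ≠ ψ := by
    rintro rfl
    exact R.add_self_notMem (R.pos_subset hψ) (R.pos_subset hsum)
  obtain ⟨n, hn, hk⟩ := R.exists_int_pair_eq_of_mem_erase hψ (Finset.mem_erase.2 ⟨hne, hφ⟩)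
  obtain ⟨h₃, h₂, -⟩ := hsz.level_eq_empty hψ
  have h₃' : n ≠ -3 := fun h => Finset.eq_empty_iff_forall_notMem.1 h₃ φ
    ((R.mem_level_of_ne_two hψ (by norm_num)).2 ⟨hφ, by rw [hk, h]; norm_num⟩)
  have h₂' : n ≠ -2 := fun h => Finset.eq_empty_iff_forall_notMem.1 h₂ φ
    ((R.mem_level_of_ne_two hψ (by norm_num)).2 ⟨hφ, by rw [hk, h]; norm_num⟩)
  have hn1 : (-1 : ℝ) ≤ n := by
    rw [abs_le] at hn
    exact_mod_cast (by omega : -1 ≤ n)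
  refine R.mem_acuteAbove.2 ⟨hsum, by rwa [add_sub_cancel_left], (pair_pos_iff hψ0).1 ?_⟩
  rw [pair_add_left, pair_self hψ0, hk]
  linarith

variable {R} in
theorem IsSquareZero.add_notMem_pos (hψ : ψ ∈ R.pos) (hsz : R.IsSquareZero ψ) (hσ : σ ∈ R.pos)
    (hne : σ ≠ ψ) (hnn : 0 ≤ ⟪σ, ψ⟫) (hmin : ψ - σ ∉ R.pos) : ψ + σ ∉ R.pos := by
  intro hsum
  have hψr := R.pos_subset hψ
  have hψ0 := R.root_ne_zero _ hψr
  have hr : σ - ψ ∈ R.roots := by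
    rcases hnn.lt_or_eq with hpos | hzero
    · exact R.sub_mem σ (R.pos_subset hσ) ψ hψr hpos hne
    · have hk : pair (ψ + σ) ψ = 2 := by
        rw [pair_add_left, pair_self hψ0, pair, ← hzero]
        simp
      convert R.sub_smul_mem_of_pair_eq hψr (R.pos_subset hsum) hk using 1
      module
  have hφ : σ - ψ ∈ R.pos := (R.pos_iff _ hr).2 (by rwa [neg_sub])
  exact hsz _ hφ (by simpa using hσ) (by simpa using R.pos_subset hsum)

theorem inner_sum_erase_le (hΨ : Ψ ⊆ R.pos) (hψ : ψ ∈ Ψ) (hmin : ∀ ψ' ∈ Ψ, ψ - ψ' ∉ R.pos) :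
    ⟪∑ x ∈ Ψ.erase ψ, x, ψ⟫ ≤ ⟪∑ β ∈ R.acuteAbove ψ, β, ψ⟫ ∧
      (⟪∑ x ∈ Ψ.erase ψ, x, ψ⟫ = ⟪∑ β ∈ R.acuteAbove ψ, β, ψ⟫ ↔
        R.acuteAbove ψ ⊆ Ψ.erase ψ ∧ ∀ x ∈ Ψ.erase ψ, 0 ≤ ⟪x, ψ⟫) := by
  simp only [sum_inner]
  refine Finset.sum_le_sum_and_eq_iff_of_pos_mem (fun x hx h => ?_)
    fun β hβ => (R.mem_acuteAbove.1 hβ).2.2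
  have hxΨ := Finset.mem_of_mem_erase hx
  have hr := R.sub_mem x (R.pos_subset (hΨ hxΨ)) ψ (R.pos_subset (hΨ hψ)) h
    (Finset.ne_of_mem_erase hx)
  exact R.mem_acuteAbove.2 ⟨hΨ hxΨ, (R.pos_iff _ hr).2 (by rw [neg_sub]; exact hmin x hxΨ), h⟩

theorem isAbelianIdeal_iff_erase (hΨ : Ψ ⊆ R.pos) (hψ : ψ ∈ Ψ)
    (hmin : ∀ ψ' ∈ Ψ, ψ - ψ' ∉ R.pos) :
    R.IsAbelianIdeal Ψ ↔ R.IsAbelianIdeal (Ψ.erase ψ) ∧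
      ⟪∑ x ∈ Ψ.erase ψ, x, ψ⟫ = ⟪∑ β ∈ R.acuteAbove ψ, β, ψ⟫ ∧ R.IsSquareZero ψ := by
  rw [(R.inner_sum_erase_le hΨ hψ hmin).2]
  refine ⟨fun h => ⟨h.erase hmin, ⟨h.acuteAbove_subset hψ, fun x hx =>
    h.inner_nonneg hΨ hψ (Finset.mem_of_mem_erase hx)⟩, h.isSquareZero hΨ hψ⟩, ?_⟩
  rintro ⟨h', ⟨hT, hnn⟩, hsz⟩
  have hψr := R.pos_subset (hΨ hψ)
  have hmixed : ∀ σ ∈ Ψ.erase ψ, ψ + σ ∉ R.pos := fun σ hσ =>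
    hsz.add_notMem_pos (hΨ hψ) (hΨ (Finset.mem_of_mem_erase hσ)) (Finset.ne_of_mem_erase hσ)
      (hnn σ hσ) (hmin σ (Finset.mem_of_mem_erase hσ))
  refine ⟨fun σ hσ φ hφ hsum => ?_, fun σ₁ h₁ σ₂ h₂ => ?_⟩
  · by_cases hσψ : σ = ψ
    · subst hσψ
      exact Finset.mem_of_mem_erase (hT (hsz.add_mem_acuteAbove (hΨ hσ) hφ hsum))
    · exact Finset.mem_of_mem_erase (h'.1 σ (Finset.mem_erase.2 ⟨hσψ, hσ⟩) φ hφ hsum)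
  · by_cases e₁ : σ₁ = ψ <;> by_cases e₂ : σ₂ = ψ
    · subst e₁ e₂
      exact fun h => R.add_self_notMem hψr (R.pos_subset h)
    · subst e₁
      exact hmixed σ₂ (Finset.mem_erase.2 ⟨e₂, h₂⟩)
    · subst e₂
      rw [add_comm]
      exact hmixed σ₁ (Finset.mem_erase.2 ⟨e₁, h₁⟩)
    · exact h'.2 σ₁ (Finset.mem_erase.2 ⟨e₁, h₁⟩) σ₂ (Finset.mem_erase.2 ⟨e₂, h₂⟩)

end RootSystemData

namespace IrredRootSystemData

open Classical RootSystemData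

variable {V : Type} [NormedAddCommGroup V] [InnerProductSpace ℝ V] (R : IrredRootSystemData V)
  {φ ψ : V}

theorem θ_mem_roots : R.θ ∈ R.roots := R.pos_subset R.θ_mem_pos

theorem exists_casimir_eq_smul : ∃ c : ℝ, ∀ γ ∈ R.roots, R.casimir γ = c • γ := by
  obtain ⟨c, hc⟩ := R.exists_smul_eq_casimir R.θ_mem_roots
  set s := R.roots.filter fun γ => R.casimir γ = c • γ
  have horth : ∀ α ∈ s, ∀ β ∈ R.roots, β ∉ s → ⟪α, β⟫ = 0 := by
    intro α hα β hβ hβs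
    obtain ⟨d, hd⟩ := R.exists_smul_eq_casimir hβ
    have hdc : d ≠ c := fun h => hβs (Finset.mem_filter.2 ⟨hβ, by rw [← hd, h]⟩)
    have h := R.inner_casimir_comm α β
    rw [(Finset.mem_filter.1 hα).2, ← hd, real_inner_smul_left, real_inner_smul_right] at h
    exact (mul_eq_zero.1 (by linarith : (c - d) * ⟪α, β⟫ = 0)).resolve_left
      (sub_ne_zero.2 hdc.symm)
  refine ⟨c, fun γ hγ => ?_⟩
  rcases R.irreducible s (Finset.filter_subset _ _) horth with h | h
  · have : R.θ ∈ s := Finset.mem_filter.2 ⟨R.θ_mem_roots, hc.symm⟩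
    simp [h] at this
  · exact (Finset.mem_filter.1 (h ▸ hγ : γ ∈ s)).2

theorem inner_θ_nonneg (hφ : φ ∈ R.pos) : 0 ≤ ⟪φ, R.θ⟫ := by
  obtain ⟨c, rfl⟩ := R.pos_combo φ hφ
  rw [sum_inner]
  refine Finset.sum_nonneg fun i _ => ?_
  rw [real_inner_smul_left, real_inner_comm]
  exact mul_nonneg (Nat.cast_nonneg _) (R.θ_dominant i)

theorem pair_θ_eq_zero_or_one (hφ : φ ∈ R.pos) (hne : φ ≠ R.θ) :
    pair φ R.θ = 0 ∨ pair φ R.θ = 1 := by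
  have hφr := R.pos_subset hφ
  have hneg := R.ne_neg_of_mem_pos hφ R.θ_mem_pos
  obtain ⟨m, -, hm⟩ := R.exists_int_pair_eq hφr R.θ_mem_roots hne hneg
  have hlt := R.pair_mul_pair_lt_four hφr R.θ_mem_roots hne hneg
  have hcomm := R.pair_mul_inner_self_comm hφr R.θ_mem_roots
  have hφφ := real_inner_self_pos.2 (R.root_ne_zero φ hφr)
  have hle : ⟪φ, φ⟫ ≤ ⟪R.θ, R.θ⟫ := by
    rw [real_inner_self_eq_norm_sq, real_inner_self_eq_norm_sq]
    exact pow_le_pow_left₀ (norm_nonneg _) (R.θ_long φ hφr) 2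
  have h0 : 0 ≤ pair φ R.θ :=
    div_nonneg (by linarith [R.inner_θ_nonneg hφ]) real_inner_self_nonneg
  have hge : pair φ R.θ ≤ pair R.θ φ := by nlinarith
  have hm2 : (m : ℝ) < 2 := by nlinarith
  have hm0 : 0 ≤ m := by exact_mod_cast (hm ▸ h0 : (0 : ℝ) ≤ m)
  have hm2' : m < 2 := by exact_mod_cast hm2
  interval_cases m <;> simp [hm]

theorem sum_sq_inner_θ :
    ∑ φ ∈ R.roots, ⟪φ, R.θ⟫ ^ 2 = ⟪R.θ, R.θ⟫ * (‖R.ρ + R.θ‖ ^ 2 - ‖R.ρ‖ ^ 2) := by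
  have hterm : ∀ φ ∈ R.pos.erase R.θ, ⟪φ, R.θ⟫ ^ 2 = ⟪R.θ, R.θ⟫ / 2 * ⟪φ, R.θ⟫ := by
    intro φ hφ
    have h := pair_mul_inner_self φ (R.root_ne_zero _ R.θ_mem_roots)
    rcases R.pair_θ_eq_zero_or_one (Finset.mem_of_mem_erase hφ) (Finset.ne_of_mem_erase hφ)
      with h0 | h1
    · rw [h0] at h
      linear_combination (⟪R.θ, R.θ⟫ / 4 - ⟪φ, R.θ⟫ / 2) * h
    · rw [h1] at h
      linear_combination (-⟪φ, R.θ⟫ / 2) * h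
  rw [R.sum_roots_eq_two_mul_sum_pos _ fun x => by rw [inner_neg_left, neg_sq],
    ← Finset.add_sum_erase _ _ R.θ_mem_pos, Finset.sum_congr rfl hterm, ← Finset.mul_sum,
    Finset.sum_erase_eq_sub R.θ_mem_pos, ← R.two_inner_ρ, norm_add_sq_real,
    real_inner_self_eq_norm_sq]
  ring

theorem sum_sq_inner_eq (hn : ‖R.ρ + R.θ‖ ^ 2 - ‖R.ρ‖ ^ 2 = 1) (hψ : ψ ∈ R.roots) :
    ∑ φ ∈ R.roots, ⟪φ, ψ⟫ ^ 2 = ⟪ψ, ψ⟫ := by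
  obtain ⟨c, hc⟩ := R.exists_casimir_eq_smul
  have key : ∀ γ ∈ R.roots, ∑ φ ∈ R.roots, ⟪φ, γ⟫ ^ 2 = c * ⟪γ, γ⟫ := fun γ hγ => by
    rw [← real_inner_smul_left, ← hc γ hγ, inner_casimir]
    simp_rw [sq]
  have hc1 : c = 1 := by
    have h := key R.θ R.θ_mem_roots
    rw [R.sum_sq_inner_θ, hn, mul_one] at h
    exact (mul_eq_right₀ (inner_self_ne_zero.2 (R.root_ne_zero _ R.θ_mem_roots))).1 h.symm
  rw [key ψ hψ, hc1, one_mul]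

theorem one_sub_two_inner_sub_norm_sq_eq (hn : ‖R.ρ + R.θ‖ ^ 2 - ‖R.ρ‖ ^ 2 = 1)
    (hψ : ψ ∈ R.pos) :
    1 - (2 * ⟪R.ρ + ∑ β ∈ R.acuteAbove ψ, β, ψ⟫ + ‖ψ‖ ^ 2) =
      ‖ψ‖ ^ 2 / 2 * (∑ φ ∈ R.pos.erase ψ, (pair φ ψ ^ 2 - pair φ ψ) -
        2 * ∑ β ∈ R.acuteAbove ψ, pair β ψ) := by
  have hψr := R.pos_subset hψ
  have ha := (real_inner_self_pos.2 (R.root_ne_zero _ hψr)).ne'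
  have hsq : ∑ φ ∈ R.pos, ⟪φ, ψ⟫ ^ 2 = ⟪ψ, ψ⟫ / 2 := by
    have := R.sum_sq_inner_eq hn hψr
    rw [R.sum_roots_eq_two_mul_sum_pos _ fun x => by rw [inner_neg_left, neg_sq]] at this
    linarith
  have hK : ∀ φ, ⟪ψ, ψ⟫ / 2 * (pair φ ψ ^ 2 - pair φ ψ) = 2 / ⟪ψ, ψ⟫ * ⟪φ, ψ⟫ ^ 2 - ⟪φ, ψ⟫ :=
    fun φ => by
      rw [pair]
      field_simp
  have hK' : ∀ β, ⟪ψ, ψ⟫ / 2 * pair β ψ = ⟪β, ψ⟫ := fun β => by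
    rw [pair]
    field_simp
  rw [← real_inner_self_eq_norm_sq, mul_sub, Finset.mul_sum, mul_left_comm, Finset.mul_sum]
  simp only [hK, hK']
  rw [Finset.sum_erase_eq_sub hψ, Finset.sum_sub_distrib, ← Finset.mul_sum, hsq,
    ← R.two_inner_ρ, inner_add_left, sum_inner]
  field_simp
  ring

theorem two_inner_add_norm_sq_le_one (hn : ‖R.ρ + R.θ‖ ^ 2 - ‖R.ρ‖ ^ 2 = 1) (hψ : ψ ∈ R.pos) :
    2 * ⟪R.ρ + ∑ β ∈ R.acuteAbove ψ, β, ψ⟫ + ‖ψ‖ ^ 2 ≤ 1 ∧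
      (2 * ⟪R.ρ + ∑ β ∈ R.acuteAbove ψ, β, ψ⟫ + ‖ψ‖ ^ 2 = 1 ↔ R.IsSquareZero ψ) := by
  have hid := R.one_sub_two_inner_sub_norm_sq_eq hn hψ
  obtain ⟨hle, heq⟩ := R.two_mul_sum_pair_acuteAbove_le hψ
  have hc : 0 < ‖ψ‖ ^ 2 / 2 := by
    have := norm_pos_iff.2 (R.root_ne_zero _ (R.pos_subset hψ))
    positivity
  rw [← heq]
  constructor
  · nlinarith
  constructor
  · intro h
    rw [h, sub_self, eq_comm, mul_eq_zero, sub_eq_zero] at hid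
    exact (hid.resolve_left hc.ne').symm
  · intro h
    rw [h, sub_self, mul_zero, sub_eq_zero] at hid
    exact hid.symm

end IrredRootSystemData

/-- **Kostant's theorem (1965).** With the canonical normalization
`‖ρ+θ‖² − ‖ρ‖² = 1`, for any subset `Ψ ⊆ Φ₊` one has
`‖ρ + ⟨Ψ⟩‖² − ‖ρ‖² ≤ |Ψ|`, with equality if and only if `Ψ` corresponds to an
abelian ideal of the Borel subalgebra, i.e. `(Ψ+Φ₊)∩Φ₊ ⊆ Ψ` and
`(Ψ+Ψ)∩Φ₊ = ∅`. -/
theorem kostant_criterion_abelian_ideal (R : IrredRootSystemData V)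
    (hnorm : ‖R.ρ + R.θ‖ ^ 2 - ‖R.ρ‖ ^ 2 = 1)
    (Ψ : Finset V) (hΨ : Ψ ⊆ R.pos) :
    ‖R.ρ + ∑ φ ∈ Ψ, φ‖ ^ 2 - ‖R.ρ‖ ^ 2 ≤ (Ψ.card : ℝ) ∧
    (‖R.ρ + ∑ φ ∈ Ψ, φ‖ ^ 2 - ‖R.ρ‖ ^ 2 = (Ψ.card : ℝ) ↔
      (∀ ψ ∈ Ψ, ∀ φ ∈ R.pos, ψ + φ ∈ R.pos → ψ + φ ∈ Ψ) ∧
      (∀ ψ₁ ∈ Ψ, ∀ ψ₂ ∈ Ψ, ψ₁ + ψ₂ ∉ R.pos)) := by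
  classical
  induction Ψ using Finset.strongInduction with
  | H Ψ ih =>
  change _ ∧ (_ ↔ R.IsAbelianIdeal Ψ)
  rcases Ψ.eq_empty_or_nonempty with rfl | hne
  · simp [RootSystemData.IsAbelianIdeal]
  obtain ⟨ψ, hψ, hmin⟩ := R.exists_minimal hne
  obtain ⟨ih_le, ih_eq⟩ := ih _ (Finset.erase_ssubset hψ) ((Finset.erase_subset ψ Ψ).trans hΨ)
  obtain ⟨loc_le, loc_eq⟩ := R.two_inner_add_norm_sq_le_one hnorm (hΨ hψ)
  have hstep := (R.inner_sum_erase_le hΨ hψ hmin).1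
  have hsplit : ‖R.ρ + ∑ φ ∈ Ψ, φ‖ ^ 2 - ‖R.ρ‖ ^ 2 =
      (‖R.ρ + ∑ φ ∈ Ψ.erase ψ, φ‖ ^ 2 - ‖R.ρ‖ ^ 2) +
        (2 * ⟪R.ρ + ∑ φ ∈ Ψ.erase ψ, φ, ψ⟫ + ‖ψ‖ ^ 2) := by
    rw [← Finset.add_sum_erase _ _ hψ, add_left_comm, add_comm ψ, norm_add_sq_real]
    ring
  have hcard : (#Ψ : ℝ) = #(Ψ.erase ψ) + 1 := by
    rw [← Finset.card_erase_add_one hψ, Nat.cast_succ]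
  change _ ↔ R.IsAbelianIdeal _ at ih_eq
  rw [inner_add_left] at hsplit loc_le loc_eq
  rw [hsplit, hcard, R.isAbelianIdeal_iff_erase hΨ hψ hmin, ← ih_eq, ← loc_eq]
  exact ⟨by linarith, fun h => ⟨by linarith, by linarith, by linarith⟩,
    fun ⟨h₁, h₂, h₃⟩ => by linarith⟩
end
end

section
/- If φ is a long root of an irreducible root system, then L(φ) := 2(θ−φ | ρ)/(θ|θ) = g − 1 − ⟨ρ, φ∨⟩, where g is the dual Coxeter number and φ∨ the coroot of φ. In particular L(φ) is a nonnegative integer for φ a positive long root, and for a positive long root φ one has L(φ) = g − 2 if and only if φ is a long simple root. -/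
open scoped RealInnerProductSpace BigOperators

noncomputable section

variable (V : Type) [NormedAddCommGroup V] [InnerProductSpace ℝ V] [FiniteDimensional ℝ V]

/-! For a long root `φ` we have `(φ|φ) = (θ|θ)`, so `L(φ) = ⟨ρ,θ∨⟩ − ⟨ρ,φ∨⟩`, and everything
reduces to facts about `⟨ρ,φ∨⟩` for a positive root `φ`. The positive roots sent to negative
roots by `s_φ` sum to `ρ − s_φ ρ = ⟨ρ,φ∨⟩φ`. Pairing with `φ∨`, and matching `β` with `−s_φ β`,
which has the same pairing, shows that `⟨ρ,φ∨⟩` is an integer. For a simple root `α` that set is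
`{α}`, so `⟨ρ,α∨⟩ = 1`; hence `(ρ|·)` is positive on positive roots and `L(φ) ≥ 0`. Conversely,
if `⟨ρ,φ∨⟩ = 1` positivity forces the set to be `{φ}`, whereas it contains every simple root
`α ≠ φ` with `(α|φ) > 0`, and such an `α` exists unless `φ` is simple. -/

open Finset

lemma Int.even_sum_of_involution {ι : Type*} {s : Finset ι} (f : ι → ℤ) (g : ι → ι)
    (hg : ∀ a ∈ s, g a ∈ s) (hgg : ∀ a ∈ s, g (g a) = a) (hf : ∀ a ∈ s, f (g a) = f a)
    (hfix : ∀ a ∈ s, g a = a → Even (f a)) : Even (∑ a ∈ s, f a) := by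
  rw [← ZMod.intCast_eq_zero_iff_even, Int.cast_sum]
  refine sum_involution (fun a _ => g a) (fun a ha => ?_) (fun a ha hne hfixed => ?_) hg hgg
  · rw [hf a ha, CharTwo.add_self_eq_zero]
  · exact hne (ZMod.intCast_eq_zero_iff_even.mpr (hfix a ha hfixed))

namespace RootSystemData

variable {E : Type} [NormedAddCommGroup E] [InnerProductSpace ℝ E]

lemma pair_self_s6 {φ : E} (hφ : φ ≠ 0) : pair φ φ = 2 := by
  rw [pair, mul_div_assoc, div_self (inner_self_ne_zero.mpr hφ), mul_one]

lemma pair_smul (c : ℝ) (β φ : E) : pair (c • β) φ = c * pair β φ := by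
  simp only [pair, real_inner_smul_left]; ring

lemma pair_neg (β φ : E) : pair (-β) φ = -pair β φ := by
  simp only [pair, inner_neg_left]; ring

lemma pair_sum (s : Finset E) (φ : E) : pair (∑ β ∈ s, β) φ = ∑ β ∈ s, pair β φ := by
  simp only [pair, sum_inner, Finset.mul_sum, Finset.sum_div]

lemma pair_sub (β γ φ : E) : pair (β - γ) φ = pair β φ - pair γ φ := by
  simp only [pair, inner_sub_left]; ring

lemma sRefl_apply_s6 (φ β : E) : sRefl φ β = β - pair β φ • φ := by
  rw [sRefl, Submodule.reflection_orthogonal_apply, Submodule.reflection_singleton_apply, pair,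
    real_inner_self_eq_norm_sq, real_inner_comm]
  simp only [RCLike.ofReal_real_eq_id, id_eq]
  module

lemma sRefl_sRefl (φ β : E) : sRefl φ (sRefl φ β) = β :=
  Submodule.reflection_reflection _ β

lemma sRefl_self (φ : E) : sRefl φ φ = -φ :=
  Submodule.reflection_orthogonalComplement_singleton_eq_neg φ

lemma neg_sRefl_neg_sRefl (φ β : E) : -sRefl φ (-sRefl φ β) = β := by
  rw [map_neg, sRefl_sRefl, neg_neg]

lemma pair_sRefl {φ : E} (hφ : φ ≠ 0) (β : E) : pair (sRefl φ β) φ = -pair β φ := by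
  rw [sRefl_apply_s6, pair_sub, pair_smul, pair_self_s6 hφ]
  ring

variable (R : RootSystemData E) {φ β γ : E}

lemma sRefl_mem_roots (hφ : φ ∈ R.roots) (hβ : β ∈ R.roots) : sRefl φ β ∈ R.roots := by
  rw [sRefl_apply_s6]; exact R.reflect_mem φ hφ β hβ

lemma neg_mem_pos_of_notMem_pos (hβ : β ∈ R.roots) (h : β ∉ R.pos) : -β ∈ R.pos := by
  by_contra h'; exact h ((R.pos_iff β hβ).mpr h')

lemma sRefl_symm (φ : E) : (sRefl φ).symm = sRefl φ :=
  Submodule.reflection_symm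

lemma mem_inversions_sRefl : β ∈ R.inversions (sRefl φ) ↔ β ∈ R.pos ∧ -sRefl φ β ∈ R.pos := by
  simp only [inversions, mem_filter, sRefl_symm]

lemma neg_sRefl_mem_inversions (hβ : β ∈ R.inversions (sRefl φ)) :
    -sRefl φ β ∈ R.inversions (sRefl φ) := by
  rw [mem_inversions_sRefl] at hβ ⊢
  rwa [neg_sRefl_neg_sRefl, and_comm]

lemma self_mem_inversions_sRefl (hφ : φ ∈ R.pos) : φ ∈ R.inversions (sRefl φ) := by
  rw [mem_inversions_sRefl, sRefl_self, neg_neg]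
  exact ⟨hφ, hφ⟩

lemma sum_inversions_sRefl (hφ : φ ∈ R.roots) :
    ∑ β ∈ R.inversions (sRefl φ), β = pair R.ρ φ • φ := by
  classical
  set B := R.inversions (sRefl φ)
  set A := R.pos.filter fun β => -sRefl φ β ∉ R.pos
  have hA : ∀ β ∈ A, sRefl φ β ∈ A := by
    intro β hβ
    obtain ⟨hβpos, hsβ⟩ := mem_filter.mp hβ
    refine mem_filter.mpr ⟨(R.pos_iff _ (R.sRefl_mem_roots hφ (R.pos_subset hβpos))).mpr hsβ, ?_⟩
    rw [sRefl_sRefl]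
    exact (R.pos_iff β (R.pos_subset hβpos)).mp hβpos
  have hsumA : ∑ β ∈ A, sRefl φ β = ∑ β ∈ A, β :=
    sum_nbij' (sRefl φ) (sRefl φ) hA hA (fun β _ => sRefl_sRefl φ β)
      (fun β _ => sRefl_sRefl φ β) fun _ _ => rfl
  have hsumB : ∑ β ∈ B, -sRefl φ β = ∑ β ∈ B, β :=
    sum_nbij' (fun β => -sRefl φ β) (fun β => -sRefl φ β) (fun β => R.neg_sRefl_mem_inversions)
      (fun β => R.neg_sRefl_mem_inversions) (fun β _ => neg_sRefl_neg_sRefl φ β)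
      (fun β _ => neg_sRefl_neg_sRefl φ β) fun _ _ => rfl
  have hsplit (f : E → E) : ∑ β ∈ R.pos, f β = ∑ β ∈ B, f β + ∑ β ∈ A, f β :=
    (sum_filter_add_sum_filter_not R.pos (fun β => -sRefl φ β ∈ R.pos) f).symm
  have hpos : ∑ β ∈ R.pos, β = (2 : ℝ) • R.ρ := by
    rw [ρ, smul_smul]; norm_num
  have h2 : (2 : ℝ) • ∑ β ∈ B, β = (2 : ℝ) • (pair R.ρ φ • φ) := by
    calc (2 : ℝ) • ∑ β ∈ B, β
        = ∑ β ∈ R.pos, β - sRefl φ (∑ β ∈ R.pos, β) := by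
          rw [map_sum, hsplit, hsplit, ← hsumA, ← hsumB, sum_neg_distrib]; module
      _ = (2 : ℝ) • (pair R.ρ φ • φ) := by
          rw [sRefl_apply_s6, sub_sub_cancel, hpos, pair_smul, mul_smul]
  exact smul_right_injective E two_ne_zero h2

lemma pair_eq_two_or_neg_two_of_sRefl_eq_neg (hφ : φ ∈ R.roots) (hβ : β ∈ R.roots)
    (h : sRefl φ β = -β) : pair β φ = 2 ∨ pair β φ = -2 := by
  have hβ' : (pair β φ / 2) • φ = β := by
    rw [sRefl_apply_s6] at h
    linear_combination (norm := module) (-(1 : ℝ) / 2) • h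
  rcases R.reduced φ hφ _ (hβ'.symm ▸ hβ) with h1 | h1
  · left; linarith
  · right; linarith

lemma two_mul_pair_rho (hφ : φ ∈ R.roots) :
    2 * pair R.ρ φ = ∑ β ∈ R.inversions (sRefl φ), pair β φ := by
  rw [← pair_sum, sum_inversions_sRefl R hφ, pair_smul, pair_self_s6 (R.root_ne_zero φ hφ), mul_comm]

lemma exists_int_pair_rho (hφ : φ ∈ R.roots) : ∃ n : ℤ, pair R.ρ φ = n := by
  have hφ0 := R.root_ne_zero φ hφ
  have hint : ∀ β ∈ R.roots, pair β φ = ⌊pair β φ⌋ := fun β hβ => by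
    obtain ⟨n, hn⟩ := R.crystal φ hφ β hβ
    rw [pair, hn, Int.floor_intCast]
  have hinv : ∀ {β}, β ∈ R.inversions (sRefl φ) → β ∈ R.roots := fun hβ =>
    R.pos_subset ((R.mem_inversions_sRefl).mp hβ).1
  obtain ⟨m, hm⟩ : Even (∑ β ∈ R.inversions (sRefl φ), ⌊pair β φ⌋) := by
    refine Int.even_sum_of_involution _ (fun β => -sRefl φ β)
      (fun β => R.neg_sRefl_mem_inversions) (fun β _ => neg_sRefl_neg_sRefl φ β)
      (fun β _ => by rw [pair_neg, pair_sRefl hφ0, neg_neg]) fun β hβ hfix => ?_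
    rcases R.pair_eq_two_or_neg_two_of_sRefl_eq_neg hφ (hinv hβ) (neg_eq_iff_eq_neg.mp hfix)
      with h | h <;>
      rw [h] <;> norm_num
  refine ⟨m, ?_⟩
  have h2 := R.two_mul_pair_rho hφ
  rw [sum_congr rfl fun β hβ => hint β (hinv hβ), ← Int.cast_sum, hm] at h2
  push_cast at h2
  linarith

lemma eq_simple_of_smul_add_eq_smul (i : Fin R.l) (hβ : β ∈ R.pos) (hγ : γ ∈ R.pos) {t s : ℝ}
    (ht : 0 < t) (h : t • β + γ = s • R.simple i) : β = R.simple i := by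
  obtain ⟨b, rfl⟩ := R.pos_combo β hβ
  obtain ⟨c, rfl⟩ := R.pos_combo γ hγ
  have hcoeff := Fintype.linearIndependent_iffₛ.mp R.simple_indep
    (fun j => t * b j + c j) (Pi.single i s) (by
      simp only [Finset.smul_sum, smul_smul, ← sum_add_distrib, ← add_smul] at h
      simpa [Pi.single_apply, ite_smul] using h)
  have hb : ∀ j ≠ i, (b j : ℝ) = 0 := fun j hj => by
    have := hcoeff j
    rw [Pi.single_eq_of_ne hj] at this
    nlinarith [(b j).cast_nonneg (α := ℝ), (c j).cast_nonneg (α := ℝ)]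
  have hβi : ∑ j, (b j : ℝ) • R.simple j = (b i : ℝ) • R.simple i :=
    Fintype.sum_eq_single i fun j hj => by rw [hb j hj, zero_smul]
  rw [hβi] at hβ ⊢
  rcases R.reduced _ (R.pos_subset (R.simple_mem_pos i)) _ (R.pos_subset hβ) with h1 | h1
  · rw [h1, one_smul]
  · linarith [(b i).cast_nonneg (α := ℝ)]

lemma inversions_sRefl_simple (i : Fin R.l) :
    R.inversions (sRefl (R.simple i)) = {R.simple i} := by
  refine eq_singleton_iff_unique_mem.mpr ⟨R.self_mem_inversions_sRefl (R.simple_mem_pos i),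
    fun β hβ => ?_⟩
  obtain ⟨hβpos, hsβ⟩ := R.mem_inversions_sRefl.mp hβ
  refine R.eq_simple_of_smul_add_eq_smul i hβpos hsβ one_pos (s := pair β (R.simple i)) ?_
  rw [sRefl_apply_s6]
  module

lemma pair_rho_simple (i : Fin R.l) : pair R.ρ (R.simple i) = 1 := by
  have h := R.sum_inversions_sRefl (R.pos_subset (R.simple_mem_pos i))
  rw [inversions_sRefl_simple, sum_singleton] at h
  exact smul_left_injective ℝ (R.root_ne_zero _ (R.pos_subset (R.simple_mem_pos i)))
    (h.symm.trans (one_smul ℝ _).symm)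

lemma inner_rho_simple_pos (i : Fin R.l) : 0 < ⟪R.ρ, R.simple i⟫ := by
  have h := R.pair_rho_simple i
  have hi := real_inner_self_pos.mpr (R.root_ne_zero _ (R.pos_subset (R.simple_mem_pos i)))
  rw [pair, div_eq_one_iff_eq hi.ne'] at h
  linarith

lemma inner_rho_sum_simple_nonneg (c : Fin R.l → ℕ) :
    0 ≤ ⟪R.ρ, ∑ i, (c i : ℝ) • R.simple i⟫ := by
  rw [inner_sum]
  exact sum_nonneg fun i _ => by
    rw [real_inner_smul_right]
    exact mul_nonneg (c i).cast_nonneg (R.inner_rho_simple_pos i).le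

lemma inner_rho_pos (hβ : β ∈ R.pos) : 0 < ⟪R.ρ, β⟫ := by
  obtain ⟨c, hc⟩ := R.pos_combo β hβ
  obtain ⟨i, hi⟩ : ∃ i, c i ≠ 0 := by
    by_contra! h
    exact R.root_ne_zero β (R.pos_subset hβ) (by simp [hc, h])
  rw [hc, inner_sum]
  refine sum_pos' (fun j _ => ?_) ⟨i, mem_univ i, ?_⟩ <;> rw [real_inner_smul_right]
  · exact mul_nonneg (c j).cast_nonneg (R.inner_rho_simple_pos j).le
  · exact mul_pos (by positivity) (R.inner_rho_simple_pos i)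

lemma exists_inner_simple_pos (hφ : φ ∈ R.pos) : ∃ i, 0 < ⟪R.simple i, φ⟫ := by
  obtain ⟨c, hc⟩ := R.pos_combo φ hφ
  by_contra! h
  have hφφ : ⟪φ, φ⟫ ≤ 0 := by
    nth_rw 1 [hc]
    rw [sum_inner]
    exact sum_nonpos fun i _ => by
      rw [real_inner_smul_left]
      exact mul_nonpos_of_nonneg_of_nonpos (c i).cast_nonneg (h i)
  exact (real_inner_self_pos.mpr (R.root_ne_zero φ (R.pos_subset hφ))).not_ge hφφ

lemma simple_mem_inversions_sRefl (hφ : φ ∈ R.pos) {i : Fin R.l} (hi : 0 < ⟪R.simple i, φ⟫)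
    (hne : φ ≠ R.simple i) : R.simple i ∈ R.inversions (sRefl φ) := by
  have hφ' := R.pos_subset hφ
  have hαi := R.pos_subset (R.simple_mem_pos i)
  refine R.mem_inversions_sRefl.mpr ⟨R.simple_mem_pos i, R.neg_mem_pos_of_notMem_pos
    (R.sRefl_mem_roots hφ' hαi) fun hs => hne ?_⟩
  have hpair : 0 < pair (R.simple i) φ :=
    div_pos (by linarith) (real_inner_self_pos.mpr (R.root_ne_zero φ hφ'))
  refine R.eq_simple_of_smul_add_eq_smul i hφ hs hpair (s := 1) ?_
  rw [sRefl_apply_s6]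
  module

lemma inversions_sRefl_eq_singleton (hφ : φ ∈ R.pos) (h : pair R.ρ φ = 1) :
    R.inversions (sRefl φ) = {φ} := by
  classical
  have hφB := R.self_mem_inversions_sRefl hφ
  have hsum := R.sum_inversions_sRefl (R.pos_subset hφ)
  rw [h, one_smul, ← add_sum_erase _ _ hφB, add_eq_left] at hsum
  have hrest : (R.inversions (sRefl φ)).erase φ = ∅ := by
    refine not_nonempty_iff_eq_empty.mp fun hne => ?_
    have hpos : 0 < ⟪R.ρ, ∑ β ∈ (R.inversions (sRefl φ)).erase φ, β⟫ := by
      rw [inner_sum]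
      exact sum_pos (fun β hβ =>
        R.inner_rho_pos (R.mem_inversions_sRefl.mp (mem_of_mem_erase hβ)).1) hne
    rw [hsum, inner_zero_right] at hpos
    exact hpos.false
  exact ((erase_eq_empty_iff _ _).mp hrest).resolve_left (ne_empty_of_mem hφB)

lemma pair_rho_eq_one_iff (hφ : φ ∈ R.pos) : pair R.ρ φ = 1 ↔ ∃ i, φ = R.simple i := by
  refine ⟨fun h => ?_, fun ⟨i, hi⟩ => hi ▸ R.pair_rho_simple i⟩
  obtain ⟨i, hi⟩ := R.exists_inner_simple_pos hφ
  refine ⟨i, by_contra fun hne => hne ?_⟩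
  have hmem := R.simple_mem_inversions_sRefl hφ hi hne
  rwa [R.inversions_sRefl_eq_singleton hφ h, mem_singleton, eq_comm] at hmem

end RootSystemData

namespace IrredRootSystemData

open RootSystemData

variable {E : Type} [NormedAddCommGroup E] [InnerProductSpace ℝ E] (R : IrredRootSystemData E)
  {φ : E}

lemma L_eq_of_isLong (hlong : R.IsLong φ) : R.L φ = R.dualCox - 1 - pair R.ρ φ := by
  have hφφ : ⟪φ, φ⟫ = ⟪R.θ, R.θ⟫ := by
    rw [real_inner_self_eq_norm_sq, real_inner_self_eq_norm_sq, show ‖φ‖ = ‖R.θ‖ from hlong]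
  rw [L, dualCox, pair, pair, hφφ, inner_sub_left, real_inner_comm R.ρ R.θ, real_inner_comm R.ρ φ]
  ring

lemma L_nonneg (hφ : φ ∈ R.pos) : 0 ≤ R.L φ := by
  obtain ⟨c, hc⟩ := R.θ_highest φ hφ
  have h := R.inner_rho_sum_simple_nonneg c
  rw [← hc, real_inner_comm] at h
  exact div_nonneg (mul_nonneg zero_le_two h) real_inner_self_nonneg

end IrredRootSystemData

set_option linter.unusedSectionVars false in
theorem L_long_root (R : IrredRootSystemData V) (φ : V)
    (hlong : R.IsLong φ) :
    R.L φ = R.dualCox - 1 - RootSystemData.pair R.ρ φ ∧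
    (φ ∈ R.pos → ∃ m : ℕ, R.L φ = (m : ℝ)) ∧
    (φ ∈ R.pos → (R.L φ = R.dualCox - 2 ↔ ∃ i, φ = R.simple i)) := by
  have hL := R.L_eq_of_isLong hlong
  refine ⟨hL, fun hφ => ?_, fun hφ => ?_⟩
  · obtain ⟨n, hn⟩ := R.exists_int_pair_rho (R.pos_subset R.θ_mem_pos)
    obtain ⟨m, hm⟩ := R.exists_int_pair_rho (R.pos_subset hφ)
    have hLint : R.L φ = ((n - m : ℤ) : ℝ) := by
      rw [hL, IrredRootSystemData.dualCox, hn, hm]; push_cast; ring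
    obtain ⟨k, hk⟩ := Int.eq_ofNat_of_zero_le (by exact_mod_cast hLint ▸ R.L_nonneg hφ)
    exact ⟨k, by rw [hLint, hk]; rfl⟩
  · rw [← R.pair_rho_eq_one_iff hφ, hL]
    constructor <;> intro h <;> linarith
end
end

section
/- Let φ be a positive long root, w ∈ W with wφ = θ minimal, and ŵ an element of the parabolic subgroup Ŵ_{⊥φ} of the affine Weyl group generated by those reflections s_i (i = 0,…,l, with α₀ = −θ) for which α_i ⊥ φ. Then s₀wŵρ − s₀wρ is perpendicular to the highest root θ. -/
open scoped RealInnerProductSpace BigOperators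

noncomputable section

variable (V : Type) [NormedAddCommGroup V] [InnerProductSpace ℝ V] [FiniteDimensional ℝ V]

namespace IrredRootSystemData

variable {V} (R : IrredRootSystemData V)

/-- A simple reflection, viewed as an affine transformation. -/
def affSimple (i : Fin R.l) : V ≃ᵃ[ℝ] V :=
  (RootSystemData.sRefl (R.simple i)).toLinearEquiv.toAffineEquiv

/-- The affine reflection `s₀ : λ ↦ s_θ λ + gθ` as an affine transformation. -/
def affS0 : V ≃ᵃ[ℝ] V :=
  ((RootSystemData.sRefl R.θ).toLinearEquiv.toAffineEquiv).trans
    (AffineEquiv.constVAdd ℝ V (R.dualCox • R.θ))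

/-- The subgroup `Ŵ_{⊥φ}` of the affine Weyl group generated by those `s_i`
(`i = 0, …, l`, with `α₀ = −θ`) for which `α_i ⊥ φ`. -/
def affWperp (φ : V) : Subgroup (V ≃ᵃ[ℝ] V) :=
  Subgroup.closure ({e | ∃ i, ⟪R.simple i, φ⟫ = 0 ∧ e = R.affSimple i} ∪
    {e | ⟪R.θ, φ⟫ = 0 ∧ e = R.affS0})

/-- The subgroup `W_{⊥φ}` generated by the simple reflections `s_i` (`i ≥ 1`)
with `α_i ⊥ φ`, viewed inside the affine Weyl group. -/
def finWperp (φ : V) : Subgroup (V ≃ᵃ[ℝ] V) :=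
  Subgroup.closure {e | ∃ i, ⟪R.simple i, φ⟫ = 0 ∧ e = R.affSimple i}

/-- The length of an element of the affine Weyl group: the minimal length of a
word in the generators `s₀, s₁, …, s_l`. -/
def affLen (wh : V ≃ᵃ[ℝ] V) : ℕ :=
  sInf {k : ℕ | ∃ f : Fin k → (V ≃ᵃ[ℝ] V),
    (∀ j, f j ∈ Set.range R.affSimple ∪ {R.affS0}) ∧ wh = (List.ofFn f).prod}

end IrredRootSystemData

/-! Every generator of `Ŵ_{⊥φ}` preserves the functional `⟪·, φ⟫`: the `s_i` with `α_i ⊥ φ` are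
reflections fixing `φ`, and `s₀` is a reflection fixing `φ` followed by a translation by a
multiple of `θ ⊥ φ`. Hence `ŵρ - ρ ⊥ φ`, so `w(ŵρ - ρ) ⊥ wφ = θ`, and `s₀` only negates the
`θ`-component of a difference of vectors. -/

section InnerStabilizer

variable {E : Type} [NormedAddCommGroup E] [InnerProductSpace ℝ E]

def innerStabilizer (φ : E) : Subgroup (E ≃ᵃ[ℝ] E) where
  carrier := {e | ∀ x, ⟪e x, φ⟫ = ⟪x, φ⟫}
  mul_mem' {e f} he hf x := (he (f x)).trans (hf x)
  one_mem' _ := rfl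
  inv_mem' {e} he x := by
    change ⟪e.symm x, φ⟫ = ⟪x, φ⟫
    conv_rhs => rw [← e.apply_symm_apply x]
    exact (he _).symm

theorem RootSystemData.inner_sRefl_of_inner_eq_zero {α φ : E} (h : ⟪α, φ⟫ = 0) (x : E) :
    ⟪RootSystemData.sRefl α x, φ⟫ = ⟪x, φ⟫ := by
  have hφ : φ ∈ (ℝ ∙ α)ᗮ := Submodule.mem_orthogonal_singleton_iff_inner_right.mpr h
  conv_lhs => rw [← Submodule.reflection_mem_subspace_eq_self hφ]
  exact LinearIsometryEquiv.inner_map_map _ _ _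

namespace IrredRootSystemData

variable (R : IrredRootSystemData E)

theorem θ_ne_zero : R.θ ≠ 0 :=
  R.root_ne_zero _ (R.pos_subset R.θ_mem_pos)

theorem affSimple_mem_innerStabilizer {φ : E} {i : Fin R.l} (h : ⟪R.simple i, φ⟫ = 0) :
    R.affSimple i ∈ innerStabilizer φ :=
  RootSystemData.inner_sRefl_of_inner_eq_zero h

theorem affS0_mem_innerStabilizer {φ : E} (h : ⟪R.θ, φ⟫ = 0) :
    R.affS0 ∈ innerStabilizer φ := by
  intro x
  simp only [affS0, AffineEquiv.trans_apply, AffineEquiv.constVAdd_apply, vadd_eq_add,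
    LinearEquiv.coe_toAffineEquiv, LinearIsometryEquiv.coe_toLinearEquiv]
  rw [inner_add_left, real_inner_smul_left, h, mul_zero, zero_add,
    RootSystemData.inner_sRefl_of_inner_eq_zero h]

theorem affWperp_le_innerStabilizer (φ : E) : R.affWperp φ ≤ innerStabilizer φ := by
  rw [affWperp, Subgroup.closure_le]
  rintro e (⟨i, hi, rfl⟩ | ⟨hθ, rfl⟩)
  · exact R.affSimple_mem_innerStabilizer hi
  · exact R.affS0_mem_innerStabilizer hθ

theorem inner_s0_sub_s0 (a b : E) : ⟪R.s0 a - R.s0 b, R.θ⟫ = -⟪a - b, R.θ⟫ := by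
  have hθθ : ⟪R.θ, R.θ⟫ ≠ 0 := inner_self_ne_zero.mpr R.θ_ne_zero
  simp only [s0, RootSystemData.pair, inner_sub_left, real_inner_smul_left]
  field_simp
  ring

end IrredRootSystemData

end InnerStabilizer

theorem s0_w_what_rho_sub_perp_theta (R : IrredRootSystemData V) (φ : V)
    (w : V ≃ₗᵢ[ℝ] V) (hwφ : w φ = R.θ)
    (what : V ≃ᵃ[ℝ] V) (hwhat : what ∈ R.affWperp φ) :
    ⟪R.s0 (w (what R.ρ)) - R.s0 (w R.ρ), R.θ⟫ = 0 := by
  have hfix : ⟪what R.ρ, φ⟫ = ⟪R.ρ, φ⟫ := R.affWperp_le_innerStabilizer φ hwhat R.ρ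
  rw [R.inner_s0_sub_s0, ← map_sub, ← hwφ, LinearIsometryEquiv.inner_map_map, inner_sub_left,
    hfix, sub_self, neg_zero]
end
end

section
/- In the setting above, ‖s₀wŵρ‖² − ‖s₀wρ‖² = ‖ŵρ‖² − ‖ρ‖² for every ŵ ∈ Ŵ_{⊥φ}. -/
open scoped RealInnerProductSpace BigOperators

noncomputable section

variable (V : Type) [NormedAddCommGroup V] [InnerProductSpace ℝ V] [FiniteDimensional ℝ V]

/-!
Every generator of `Ŵ_{⊥φ}` preserves the functional `(· | φ)`: the linear ones are reflections
in roots orthogonal to `φ`, and `s₀` (only present when `θ ⊥ φ`) moreover translates by a multiple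
of `θ`. The isometry `w` turns `(· | φ)` into `(· | θ)`. Finally `s₀λ = λ − c θ` with `c` an affine
function of `(λ | θ)`, so `‖s₀λ‖² − ‖λ‖²` depends only on `(λ | θ)`.
-/

section

variable {V : Type} [NormedAddCommGroup V] [InnerProductSpace ℝ V]

namespace RootSystemData

lemma inner_sRefl_of_inner_eq_zero_s16 {α φ : V} (h : ⟪α, φ⟫ = 0) (x : V) :
    ⟪sRefl α x, φ⟫ = ⟪x, φ⟫ := by
  have hφ : φ ∈ (ℝ ∙ α)ᗮ := Submodule.mem_orthogonal_singleton_iff_inner_right.mpr h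
  have hproj : ⟪x - ((ℝ ∙ α)ᗮ).starProjection x, φ⟫ = 0 :=
    Submodule.starProjection_inner_eq_zero x φ hφ
  rw [inner_sub_left] at hproj
  rw [sRefl, Submodule.reflection_apply, two_smul, inner_sub_left, inner_add_left]
  linarith

end RootSystemData

namespace IrredRootSystemData

variable (R : IrredRootSystemData V)

lemma inner_affS0_of_inner_eq_zero {φ : V} (h : ⟪R.θ, φ⟫ = 0) (x : V) :
    ⟪R.affS0 x, φ⟫ = ⟪x, φ⟫ := by
  change ⟪R.dualCox • R.θ + RootSystemData.sRefl R.θ x, φ⟫ = ⟪x, φ⟫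
  rw [inner_add_left, real_inner_smul_left, h, mul_zero, zero_add,
    RootSystemData.inner_sRefl_of_inner_eq_zero_s16 h]

lemma inner_apply_of_mem_affWperp {φ : V} {e : V ≃ᵃ[ℝ] V} (he : e ∈ R.affWperp φ) (x : V) :
    ⟪e x, φ⟫ = ⟪x, φ⟫ := by
  induction he using Subgroup.closure_induction generalizing x with
  | mem e he =>
    rcases he with ⟨i, hi, rfl⟩ | ⟨hθ, rfl⟩
    · exact RootSystemData.inner_sRefl_of_inner_eq_zero_s16 hi x
    · exact R.inner_affS0_of_inner_eq_zero hθ x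
  | one => rfl
  | mul a b _ _ ha hb => exact (ha (b x)).trans (hb x)
  | inv a _ ha => rw [← ha (a⁻¹ x), AffineEquiv.inv_def, AffineEquiv.apply_symm_apply]

lemma norm_sq_s0_sub_norm_sq_s0 {lam mu : V} (h : ⟪lam, R.θ⟫ = ⟪mu, R.θ⟫) :
    ‖R.s0 lam‖ ^ 2 - ‖R.s0 mu‖ ^ 2 = ‖lam‖ ^ 2 - ‖mu‖ ^ 2 := by
  simp only [s0, RootSystemData.pair, norm_sub_sq_real, real_inner_smul_right, norm_smul,
    mul_pow, Real.norm_eq_abs, sq_abs, h]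
  ring

end IrredRootSystemData

end

theorem norm_sq_s0_w_what_rho (R : IrredRootSystemData V) (φ : V)
    (w : V ≃ₗᵢ[ℝ] V) (hwφ : w φ = R.θ)
    (what : V ≃ᵃ[ℝ] V) (hwhat : what ∈ R.affWperp φ) :
    ‖R.s0 (w (what R.ρ))‖ ^ 2 - ‖R.s0 (w R.ρ)‖ ^ 2
      = ‖what R.ρ‖ ^ 2 - ‖R.ρ‖ ^ 2 := by
  have hw : ∀ x, ⟪w x, R.θ⟫ = ⟪x, φ⟫ := fun x => by
    rw [← hwφ, LinearIsometryEquiv.inner_map_map]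
  have hθ : ⟪w (what R.ρ), R.θ⟫ = ⟪w R.ρ, R.θ⟫ := by
    rw [hw, hw, R.inner_apply_of_mem_affWperp hwhat]
  rw [R.norm_sq_s0_sub_norm_sq_s0 hθ, LinearIsometryEquiv.norm_map,
    LinearIsometryEquiv.norm_map]
end
end

section
/- In the fundamental alcove A of the affine Weyl group of an irreducible root system of rank l, the (l−1)-dimensional volumes of the facets F₀,…,F_l satisfy vol(F₀) : vol(F₁) : ⋯ : vol(F_l) = ‖α₀‖n₀ : ‖α₁‖n₁ : ⋯ : ‖α_l‖n_l, where n₀ = 1, α₀ = −θ, and n₁,…,n_l are the marks. -/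
open scoped RealInnerProductSpace BigOperators

noncomputable section

variable (V : Type) [NormedAddCommGroup V] [InnerProductSpace ℝ V] [FiniteDimensional ℝ V]

open MeasureTheory

variable {V}

/-- The vertices of the fundamental alcove: `0` and `ϖ̌_i / n_i`, where the
`ϖ̌_i` are the weights dual to the simple roots normalized by
`(ϖ̌_i | α_j) = δ_ij / 2` and the `n_i` are the marks. -/
def alcoveVertex (R : IrredRootSystemData V) (n : Fin R.l → ℕ)
    (cw : Fin R.l → V) : Fin (R.l + 1) → V :=
  Fin.cases 0 fun i => ((n i : ℝ))⁻¹ • cw i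

/-- The facet `F_j` of the fundamental alcove: the convex hull of all vertices
other than the `j`-th one. -/
def alcoveFacet (R : IrredRootSystemData V) (n : Fin R.l → ℕ)
    (cw : Fin R.l → V) (j : Fin (R.l + 1)) : Set V :=
  convexHull ℝ (alcoveVertex R n cw '' {i | i ≠ j})

/-- The quantity `‖α_i‖ n_i` (with `α₀ = −θ`, `n₀ = 1`). -/
def normMark (R : IrredRootSystemData V) (n : Fin R.l → ℕ) :
    Fin (R.l + 1) → ℝ :=
  Fin.cases ‖R.θ‖ fun i => ‖R.simple i‖ * (n i : ℝ)

/-!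
The facet `F_k` lies in the hyperplane `⟪a_k, x⟫ = h_k`, with `(a₀, h₀) = (θ, 1/2)` and
`(a_k, h_k) = (α_k, 0)`, at distance `1 / (2 n_k ‖α_k‖)` from the opposite vertex. The
`(l-1)`-volume of a simplex is a universal constant times the square root of the Gram
determinant of its edge vectors, and the Gram determinant `G` of the nonzero vertices of the
alcove is, for every `k`, the squared height over `F_k` times the Gram determinant of `F_k`.
Hence `vol F_k` is `2 n_k ‖α_k‖ √G` times a constant depending only on `l`.
-/

open scoped Pointwise
open Module Submodule

section Simplex

variable {E : Type*} [NormedAddCommGroup E] [InnerProductSpace ℝ E]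
  {ι : Type*} [Fintype ι]

namespace Matrix

theorem gram_sum_smul (v : ι → E) (T : Matrix ι ι ℝ) :
    gram ℝ (fun j => ∑ i, T i j • v i) = Tᵀ * gram ℝ v * T := by
  ext a b
  simp only [gram_apply, sum_inner, inner_sum, real_inner_smul_left, real_inner_smul_right,
    mul_apply, transpose_apply, Finset.sum_mul]
  exact Finset.sum_congr rfl fun _ _ => Finset.sum_congr rfl fun _ _ => by ring

theorem det_gram_add_smul_sum [DecidableEq ι] (v : ι → E) (p q : ι → ℝ) (hpq : q ⬝ᵥ p = 0) :
    (gram ℝ (fun j => v j + q j • ∑ i, p i • v i)).det = (gram ℝ v).det := by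
  set T : Matrix ι ι ℝ := 1 + replicateCol Unit p * replicateRow Unit q
  have hT : (fun j => v j + q j • ∑ i, p i • v i) = fun j => ∑ i, T i j • v i := by
    ext j
    simp [T, add_smul, Finset.sum_add_distrib, Matrix.one_apply, Finset.smul_sum, mul_apply,
      mul_smul, smul_comm (q j)]
  have hdetT : T.det = 1 := by
    rw [det_one_add_replicateCol_mul_replicateRow, hpq, add_zero]
  rw [hT, gram_sum_smul, det_mul, det_mul, det_transpose, hdetT]
  ring

theorem det_gram_eq_norm_sq_mul_of_inner_eq_zero [DecidableEq ι] (w : ι → E) (k : ι)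
    (hw : ∀ i ≠ k, ⟪w k, w i⟫ = 0) :
    (gram ℝ w).det = ‖w k‖ ^ 2 * (gram ℝ fun i : {i // i ≠ k} => w i).det := by
  rw [twoBlockTriangular_det _ (· ≠ k) fun i hi j hj => by
    rw [not_not.mp hi]; exact hw j hj]
  have : Subsingleton {i // ¬i ≠ k} := ⟨fun a b => Subtype.ext <| by
    rw [not_not.mp a.2, not_not.mp b.2]⟩
  rw [det_eq_elem_of_subsingleton (toSquareBlockProp (gram ℝ w) fun i => ¬i ≠ k) ⟨k, by simp⟩]
  simp only [toSquareBlockProp_def, of_apply, gram_apply, real_inner_self_eq_norm_sq]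
  exact mul_comm _ _

theorem det_gram_eq_norm_sq_mul_of_mem_span [DecidableEq ι] (u : ι → E) (k : ι) {z : E}
    (hz : z ∈ span ℝ (Set.range fun i : {i // i ≠ k} => u i))
    (hu : ∀ i ≠ k, ⟪u k - z, u i⟫ = 0) :
    (gram ℝ u).det = ‖u k - z‖ ^ 2 * (gram ℝ fun i : {i // i ≠ k} => u i).det := by
  obtain ⟨c, hc⟩ := (mem_span_range_iff_exists_fun ℝ).mp hz
  set p : ι → ℝ := fun i => if h : i = k then 0 else -c ⟨i, h⟩
  have hp : ∑ i, p i • u i = -z := by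
    have hp' : ∀ i : {i // i ≠ k}, p i • u i = -(c i • u i) := fun i => by simp [p, i.2]
    rw [Fintype.sum_eq_add_sum_subtype_ne _ k, Finset.sum_congr rfl fun i _ => hp' i,
      Finset.sum_neg_distrib, hc]
    simp [p]
  have hshear : (fun j => u j + (Pi.single k 1 : ι → ℝ) j • ∑ i, p i • u i) =
      Function.update u k (u k - z) := by
    ext j
    rcases eq_or_ne j k with rfl | hj
    · simp [hp, sub_eq_add_neg]
    · simp [hj]
  rw [← det_gram_add_smul_sum u p (Pi.single k 1) (by simp [p]), hshear,
    det_gram_eq_norm_sq_mul_of_inner_eq_zero _ k fun i hi => by simpa [hi] using hu i hi,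
    Function.update_self]
  congr 3
  ext i
  exact Function.update_of_ne i.2 _ _

/-- Base times height: `|⟪a, u k⟫| / ‖a‖` is the distance from `u k` to the hyperplane `aᗮ`
containing the other vectors. -/
theorem det_gram_eq_inner_div_norm_sq_mul [DecidableEq ι] [FiniteDimensional ℝ E]
    (hdim : finrank ℝ E = Fintype.card ι) (u : ι → E) (k : ι) {a : E} (ha : a ≠ 0)
    (hu : ∀ i ≠ k, ⟪a, u i⟫ = 0) :
    (gram ℝ u).det = (⟪a, u k⟫ / ‖a‖) ^ 2 * (gram ℝ fun i : {i // i ≠ k} => u i).det := by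
  by_cases hy : LinearIndependent ℝ fun i : {i // i ≠ k} => u i
  swap
  · have hu' : ¬LinearIndependent ℝ u := fun h => hy (h.comp _ Subtype.val_injective)
    rw [← det_gram_ne_zero_iff_linearIndependent (𝕜 := ℝ), not_not] at hy hu'
    rw [hy, hu', mul_zero]
  have hspan : span ℝ (Set.range fun i : {i // i ≠ k} => u i) = (ℝ ∙ a)ᗮ := by
    refine eq_of_le_of_finrank_eq ?_ ?_
    · rw [span_le]
      rintro _ ⟨i, rfl⟩
      exact mem_orthogonal_singleton_iff_inner_right.mpr (hu i i.2)
    · have h := (ℝ ∙ a).finrank_add_finrank_orthogonal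
      rw [finrank_span_singleton ha, hdim] at h
      rw [finrank_span_eq_card hy, Fintype.card_subtype_compl, Fintype.card_subtype_eq]
      omega
  set t := ⟪a, u k⟫ / ‖a‖ ^ 2
  have ht : t * ‖a‖ ^ 2 = ⟪a, u k⟫ := div_mul_cancel₀ _ (pow_ne_zero 2 (norm_ne_zero_iff.mpr ha))
  have hz : u k - t • a ∈ span ℝ (Set.range fun i : {i // i ≠ k} => u i) := by
    rw [hspan, mem_orthogonal_singleton_iff_inner_right, inner_sub_right, real_inner_smul_right,
      real_inner_self_eq_norm_sq, ht, sub_self]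
  rw [det_gram_eq_norm_sq_mul_of_mem_span u k hz fun i hi => by
      rw [sub_sub_cancel, real_inner_smul_left, hu i hi, mul_zero],
    sub_sub_cancel, norm_smul, mul_pow, Real.norm_eq_abs, sq_abs, ← ht]
  field_simp

end Matrix

def cornerSimplex (d : ℕ) : Set (EuclideanSpace ℝ (Fin d)) :=
  convexHull ℝ (insert 0 (Set.range fun a => EuclideanSpace.single a 1))

theorem hausdorffMeasure_convexHull_insert_add [DecidableEq ι] [MeasurableSpace E]
    [BorelSpace E] {d : ℕ} (hd : Fintype.card ι = d) (b : E) (y : ι → E) :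
    μH[d] (convexHull ℝ (insert b (Set.range fun i => b + y i)))
      = ENNReal.ofReal √(Matrix.gram ℝ y).det * μH[d] (cornerSimplex d) := by
  set e : Fin d ≃ ι := (Fintype.equivFinOfCardEq hd).symm
  set B := EuclideanSpace.basisFun (Fin d) ℝ
  set f : EuclideanSpace ℝ (Fin d) →ₗ[ℝ] E := B.toBasis.constr ℝ (y ∘ e)
  have hf : ∀ a, f (B a) = y (e a) := fun a => by
    rw [← B.coe_toBasis, B.toBasis.constr_basis]; rfl
  have hsimplex : convexHull ℝ (insert b (Set.range fun i => b + y i))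
      = b +ᵥ f '' cornerSimplex d := by
    have hrange : (Set.range fun a => b + f (EuclideanSpace.single a 1))
        = Set.range fun i => b + y i := by
      rw [← e.surjective.range_comp]
      simp only [Function.comp_def, ← hf, B, EuclideanSpace.basisFun_apply]
    rw [cornerSimplex, f.image_convexHull, Set.image_insert_eq, ← Set.range_comp, map_zero,
      ← convexHull_vadd, Set.vadd_set_insert, Set.vadd_set_range]
    simp only [vadd_eq_add, add_zero, Function.comp_apply, hrange]
  have hnormDet : f.normDet = √(Matrix.gram ℝ y).det := by
    have h := f.normDet_sq_eq_det_gram B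
    have hg : Matrix.gram ℝ (fun a => f (B a)) = (Matrix.gram ℝ y).submatrix e e := by
      ext a a'
      simp [Matrix.gram_apply, hf]
    rw [hg, Matrix.det_submatrix_equiv_self] at h
    rw [← h, RCLike.ofReal_real_eq_id, id, Real.sqrt_sq f.normDet_nonneg]
  have h := f.hausdorffMeasure_image (cornerSimplex d)
  rw [finrank_euclideanSpace_fin] at h
  rw [hsimplex, ← Set.image_vadd,
    (isometry_vadd E b).hausdorffMeasure_image (.inl d.cast_nonneg), h, hnormDet]

theorem hausdorffMeasure_convexHull_insert_add_of_inner_eq_zero [DecidableEq ι]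
    [FiniteDimensional ℝ E] [MeasurableSpace E] [BorelSpace E] {d : ℕ}
    (hdim : finrank ℝ E = Fintype.card ι) (hι : Fintype.card ι = d + 1) (b : E) (u : ι → E)
    (k : ι) {a : E} (ha : a ≠ 0) (hu : ∀ i ≠ k, ⟪a, u i⟫ = 0)
    (hk : ⟪a, u k⟫ ≠ 0) :
    μH[d] (convexHull ℝ (insert b (Set.range fun i : {i // i ≠ k} => b + u i)))
      = ENNReal.ofReal (‖a‖ / |⟪a, u k⟫| * √(Matrix.gram ℝ u).det) *
          μH[d] (cornerSimplex d) := by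
  have hcard : Fintype.card {i // i ≠ k} = d := by simp [hι]
  rw [hausdorffMeasure_convexHull_insert_add hcard,
    Matrix.det_gram_eq_inner_div_norm_sq_mul hdim u k ha hu, Real.sqrt_mul (sq_nonneg _),
    Real.sqrt_sq_eq_abs, abs_div, abs_norm]
  field_simp [norm_ne_zero_iff.mpr ha]

theorem hausdorffMeasure_convexHull_insert_zero_image [DecidableEq ι] [FiniteDimensional ℝ E]
    [MeasurableSpace E] [BorelSpace E] {d : ℕ} (hdim : finrank ℝ E = Fintype.card ι)
    (hι : Fintype.card ι = d + 1) (v : ι → E) (c : ι) {a : E} (ha : a ≠ 0)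
    (hv : ∀ m ≠ c, ⟪a, v m⟫ = 0) (hc : ⟪a, v c⟫ ≠ 0) :
    μH[d] (convexHull ℝ (insert 0 (v '' {m | m ≠ c})))
      = ENNReal.ofReal (‖a‖ / |⟪a, v c⟫| * √(Matrix.gram ℝ v).det) *
          μH[d] (cornerSimplex d) := by
  rw [← hausdorffMeasure_convexHull_insert_add_of_inner_eq_zero hdim hι 0 v c ha hv hc,
    Set.image_eq_range]
  simp only [zero_add]
  rfl

theorem hausdorffMeasure_convexHull_range [DecidableEq ι] [FiniteDimensional ℝ E]
    [MeasurableSpace E] [BorelSpace E] {d : ℕ} (hdim : finrank ℝ E = Fintype.card ι)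
    (hι : Fintype.card ι = d + 1) (v : ι → E) {a : E} (ha : a ≠ 0) {h : ℝ} (hh : h ≠ 0)
    (hv : ∀ m, ⟪a, v m⟫ = h) :
    μH[d] (convexHull ℝ (Set.range v))
      = ENNReal.ofReal (‖a‖ / |h| * √(Matrix.gram ℝ v).det) * μH[d] (cornerSimplex d) := by
  obtain ⟨c⟩ : Nonempty ι := Fintype.card_pos_iff.mp (by omega)
  -- Edges from the base vertex `v c`: a shear of `v`, so with the same Gram determinant.
  set u : ι → E := fun m =>
    v m + (if m = c then 0 else -1 : ℝ) • ∑ i, (Pi.single c 1 : ι → ℝ) i • v i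
  have hu : ∀ m, u m = if m = c then v c else v m - v c := fun m => by
    split_ifs with hm <;> simp [u, hm, sub_eq_add_neg]
  have hrange : Set.range v = insert (v c) (Set.range fun m : {m // m ≠ c} => v c + u m) := by
    rw [← Set.insert_image_compl_eq_range _ c, Set.image_eq_range]
    congr 2
    ext m
    rw [hu, if_neg (show (m : ι) ≠ c from m.2), add_sub_cancel]
  rw [hrange, hausdorffMeasure_convexHull_insert_add_of_inner_eq_zero hdim hι _ u c ha
    (fun m hm => by rw [hu, if_neg hm, inner_sub_right, hv, hv, sub_self])
    (by rw [hu, if_pos rfl, hv]; exact hh),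
    Matrix.det_gram_add_smul_sum v _ _ (by simp), hu, if_pos rfl, hv]

end Simplex

section Alcove

variable {E : Type} [NormedAddCommGroup E] [InnerProductSpace ℝ E]
  (R : IrredRootSystemData E) (n : Fin R.l → ℕ) (cw : Fin R.l → E)

theorem normMark_nonneg (k : Fin (R.l + 1)) : 0 ≤ normMark R n k := by
  cases k using Fin.cases <;> simp only [normMark, Fin.cases_zero, Fin.cases_succ] <;> positivity

theorem alcoveFacet_zero :
    alcoveFacet R n cw 0 = convexHull ℝ (Set.range (alcoveVertex R n cw ∘ Fin.succ)) := by
  rw [alcoveFacet, Set.range_comp, Fin.range_succ]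
  rfl

theorem alcoveFacet_succ (c : Fin R.l) :
    alcoveFacet R n cw c.succ
      = convexHull ℝ (insert 0 ((alcoveVertex R n cw ∘ Fin.succ) '' {m | m ≠ c})) := by
  have hne : {i : Fin (R.l + 1) | i ≠ c.succ} = insert 0 (Fin.succ '' {m | m ≠ c}) := by
    ext i
    cases i using Fin.cases <;> simp [(Fin.succ_ne_zero c).symm]
  rw [alcoveFacet, hne, Set.image_insert_eq, Set.image_comp]
  rfl

theorem inner_simple_alcoveVertex_succ
    (hcw : ∀ i j, ⟪cw i, R.simple j⟫ = if i = j then (1 : ℝ) / 2 else 0) (c m : Fin R.l) :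
    ⟪R.simple c, alcoveVertex R n cw m.succ⟫ = if m = c then (2 * (n c : ℝ))⁻¹ else 0 := by
  rw [real_inner_comm]
  simp only [alcoveVertex, Fin.cases_succ, real_inner_smul_left, hcw]
  split_ifs with h
  · subst h; ring
  · ring

theorem inner_theta_alcoveVertex_succ (hn : ∀ i, 0 < n i)
    (hmark : R.θ = ∑ i, (n i : ℝ) • R.simple i)
    (hcw : ∀ i j, ⟪cw i, R.simple j⟫ = if i = j then (1 : ℝ) / 2 else 0) (m : Fin R.l) :
    ⟪R.θ, alcoveVertex R n cw m.succ⟫ = 1 / 2 := by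
  simp only [hmark, sum_inner, real_inner_smul_left, inner_simple_alcoveVertex_succ R n cw hcw,
    mul_ite, mul_zero, Finset.sum_ite_eq, Finset.mem_univ, if_true]
  field_simp [(hn m).ne']

theorem hausdorffMeasure_alcoveFacet [MeasurableSpace E] [BorelSpace E] {d : ℕ}
    (hl : R.l = d + 1) (hdim : finrank ℝ E = R.l) (hn : ∀ i, 0 < n i)
    (hmark : R.θ = ∑ i, (n i : ℝ) • R.simple i)
    (hcw : ∀ i j, ⟪cw i, R.simple j⟫ = if i = j then (1 : ℝ) / 2 else 0) (k : Fin (R.l + 1)) :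
    μH[d] (alcoveFacet R n cw k) = ENNReal.ofReal (normMark R n k) *
      (ENNReal.ofReal (2 * √(Matrix.gram ℝ (alcoveVertex R n cw ∘ Fin.succ)).det) *
        μH[d] (cornerSimplex d)) := by
  have : FiniteDimensional ℝ E := Module.finite_of_finrank_pos (by omega)
  have hcard : finrank ℝ E = Fintype.card (Fin R.l) := by rw [hdim, Fintype.card_fin]
  have hcard' : Fintype.card (Fin R.l) = d + 1 := by rw [Fintype.card_fin, hl]
  rw [← mul_assoc, ← ENNReal.ofReal_mul (normMark_nonneg R n k)]
  cases k using Fin.cases with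
  | zero =>
    have hθ : R.θ ≠ 0 := R.root_ne_zero _ (R.pos_subset R.θ_mem_pos)
    rw [alcoveFacet_zero, hausdorffMeasure_convexHull_range hcard hcard'
      (alcoveVertex R n cw ∘ Fin.succ) hθ (by norm_num)
      (inner_theta_alcoveVertex_succ R n cw hn hmark hcw), normMark, Fin.cases_zero,
      abs_of_pos (by norm_num)]
    congr 2
    ring
  | succ c =>
    have hα : R.simple c ≠ 0 := R.root_ne_zero _ (R.pos_subset (R.simple_mem_pos c))
    have hαv : ∀ m, ⟪R.simple c, (alcoveVertex R n cw ∘ Fin.succ) m⟫ =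
        if m = c then (2 * (n c : ℝ))⁻¹ else 0 :=
      inner_simple_alcoveVertex_succ R n cw hcw c
    have hn' : (0 : ℝ) < n c := Nat.cast_pos.mpr (hn c)
    rw [alcoveFacet_succ, hausdorffMeasure_convexHull_insert_zero_image hcard hcard' _ c hα
      (fun m hm => by rw [hαv, if_neg hm]) (by rw [hαv, if_pos rfl]; positivity),
      hαv, if_pos rfl, abs_of_pos (by positivity), normMark, Fin.cases_succ]
    congr 2
    field_simp

end Alcove

/-- The `(l−1)`-dimensional volumes of the facets `F₀, …, F_l` of the
fundamental alcove satisfy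
`vol(F₀) : ⋯ : vol(F_l) = ‖α₀‖n₀ : ⋯ : ‖α_l‖n_l`. -/
theorem facet_volume_ratio [MeasurableSpace V] [BorelSpace V]
    (R : IrredRootSystemData V) (hdim : Module.finrank ℝ V = R.l)
    (n : Fin R.l → ℕ) (hn : ∀ i, 0 < n i)
    (hmark : R.θ = ∑ i, (n i : ℝ) • R.simple i)
    (cw : Fin R.l → V)
    (hcw : ∀ i j, ⟪cw i, R.simple j⟫ = if i = j then (1 : ℝ) / 2 else 0) :
    ∀ i j : Fin (R.l + 1),
      μH[(R.l : ℝ) - 1] (alcoveFacet R n cw i) * ENNReal.ofReal (normMark R n j)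
        = μH[(R.l : ℝ) - 1] (alcoveFacet R n cw j)
            * ENNReal.ofReal (normMark R n i) := by
  intro i j
  rcases R.l.eq_zero_or_pos with hl0 | hpos
  · rw [Fin.ext (by omega : (i : ℕ) = j)]
  obtain ⟨d, hl⟩ := Nat.exists_eq_add_one.mpr hpos
  have hexp : (R.l : ℝ) - 1 = d := by rw [hl]; push_cast; ring
  rw [hexp, hausdorffMeasure_alcoveFacet R n cw hl hdim hn hmark hcw,
    hausdorffMeasure_alcoveFacet R n cw hl hdim hn hmark hcw]
  ring
end
end
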